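/- arXiv:1808.05676 — 5 statements merged into one kernel-verified Lean document; each statement's English description precedes it below -/
import Mathlib

section
/- For every integer k ≥ 1, the cycle graph C_{4k} on vertices 0, 1, …, 4k−1 has Gromov-hyperbolic curvature exactly k. In particular: (i) every geodesic triangle of C_{4k} is k-thin; and (ii) for the geodesic triangle on the vertices 0, k, 3k whose three sides are the arc 0,1,…,k, the arc k,k+1,…,3k, and the arc 3k,3k+1,…,4k−1,0, the vertex 2k (the midpoint of the second side) is at graph distance exactly k from the set of vertices of the other two sides, so this triangle is not δ-thin for any δ < k. -/
/-- A walk is a geodesic (shortest path) if its length equals the distance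
between its endpoints. -/
def SimpleGraph.IsGeodesic {V : Type*} (G : SimpleGraph V) {u v : V}
    (p : G.Walk u v) : Prop :=
  p.length = G.dist u v

/-- Every vertex on the walk `p` is within graph distance `δ` of some vertex
on `q` or on `r`. -/
def SimpleGraph.ThinSide {V : Type*} (G : SimpleGraph V) {a b c d e f : V}
    (p : G.Walk a b) (q : G.Walk c d) (r : G.Walk e f) (δ : ℝ) : Prop :=
  ∀ x ∈ p.support, ∃ y, (y ∈ q.support ∨ y ∈ r.support) ∧ (G.dist x y : ℝ) ≤ δ

/-- A geodesic triangle with sides `puv`, `puw`, `pvw` is `δ`-thin. -/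
def SimpleGraph.IsThinTriangle {V : Type*} (G : SimpleGraph V) {u v w : V}
    (puv : G.Walk u v) (puw : G.Walk u w) (pvw : G.Walk v w) (δ : ℝ) : Prop :=
  G.ThinSide puv puw pvw δ ∧ G.ThinSide puw puv pvw δ ∧ G.ThinSide pvw puv puw δ

/-- The Gromov-hyperbolic curvature of `G`: the smallest `δ ≥ 0` such that every
geodesic triangle of `G` is `δ`-thin. -/
noncomputable def SimpleGraph.gromovCurvature {V : Type*} (G : SimpleGraph V) : ℝ :=
  sInf {δ : ℝ | 0 ≤ δ ∧
    ∀ (u v w : V) (puv : G.Walk u v) (puw : G.Walk u w) (pvw : G.Walk v w),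
      G.IsGeodesic puv → G.IsGeodesic puw → G.IsGeodesic pvw →
      G.IsThinTriangle puv puw pvw δ}


section CGHelpers
open SimpleGraph
open scoped Fin.NatCast Fin.CommRing
variable {n : ℕ}

/-- The cyclic distance on `Fin n`. -/
def CGcdist (a b : Fin n) : ℕ := min ((a - b).val) ((b - a).val)

lemma CGval_sub (a b : Fin n) : (a - b).val = (a.val + (n - b.val)) % n := by
  rw [Fin.sub_def]; simp [Nat.add_comm]

lemma CGmodsub {x y : ℕ} (hx : x < n) (hy : y < n) :
    (x + (n - y)) % n = if y ≤ x then x - y else x + n - y := by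
  split_ifs with h
  · have h2 : x + (n - y) = (x - y) + n := by omega
    rw [h2, Nat.add_mod_right, Nat.mod_eq_of_lt (by omega)]
  · rw [Nat.mod_eq_of_lt (by omega)]; omega

lemma CGcdist_eq (a b : Fin n) :
    CGcdist a b = min (if b.val ≤ a.val then a.val - b.val else a.val + n - b.val)
      (if a.val ≤ b.val then b.val - a.val else b.val + n - a.val) := by
  rw [CGcdist, CGval_sub, CGval_sub, CGmodsub a.2 b.2, CGmodsub b.2 a.2]

lemma CGcdist_lipschitz {u x : Fin n} (w : Fin n) (h : (cycleGraph n).Adj u x) :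
    CGcdist u w ≤ CGcdist x w + 1 := by
  rw [cycleGraph_adj', CGval_sub, CGval_sub, CGmodsub u.2 x.2, CGmodsub x.2 u.2] at h
  have hu := u.2; have hx := x.2; have hw := w.2
  rw [CGcdist_eq, CGcdist_eq]
  split_ifs at h ⊢ <;> omega

lemma CGcdist_le_length {u v : Fin n} (p : (cycleGraph n).Walk u v) :
    CGcdist u v ≤ p.length := by
  induction p with
  | nil => rw [CGcdist_eq]; simp
  | cons h q ih =>
    rename_i a b c
    calc CGcdist a c ≤ CGcdist b c + 1 := CGcdist_lipschitz c h
    _ ≤ _ := by have := ih; simp only [Walk.length_cons]; omega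

lemma CGadj_succ [NeZero n] (hn : 2 ≤ n) (a : Fin n) : (cycleGraph n).Adj a (a + 1) := by
  rw [cycleGraph_adj']
  right
  have h : a + 1 - a = 1 := by ring
  rw [h]
  rcases n with _|_|m
  · omega
  · omega
  · rfl

/-- The ascending walk of length `m` from `a` to `a + m`. -/
def CGascWalk [NeZero n] (hn : 2 ≤ n) : (a : Fin n) → (m : ℕ) →
    (cycleGraph n).Walk a (a + (m : Fin n))
  | a, 0 => Walk.nil.copy rfl (by simp)
  | a, (m+1) => (Walk.cons (CGadj_succ hn a) (CGascWalk hn (a+1) m)).copy rfl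
      (by push_cast; ring)

lemma CGascWalk_length [NeZero n] (hn : 2 ≤ n) (a : Fin n) (m : ℕ) :
    (CGascWalk hn a m).length = m := by
  induction m generalizing a with
  | zero => simp [CGascWalk]
  | succ m ih => simp [CGascWalk, ih]

lemma CGascWalk_support [NeZero n] (hn : 2 ≤ n) (a : Fin n) (m : ℕ) :
    (CGascWalk hn a m).support
      = List.map (fun i : ℕ => a + (i : Fin n)) (List.range (m+1)) := by
  induction m generalizing a with
  | zero =>
    show (Walk.nil.copy rfl (by simp)).support = _
    rw [Walk.support_copy, Walk.support_nil, List.range_succ]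
    simp
  | succ m ih =>
    rw [CGascWalk]
    rw [Walk.support_copy, Walk.support_cons, ih]
    conv_rhs => rw [List.range_succ_eq_map]
    rw [List.map_cons, List.map_map]
    congr 1
    · simp
    · congr 1
      funext i
      simp only [Function.comp_apply]
      push_cast
      ring

lemma CGadd_natCast_val [NeZero n] (a : Fin n) (i : ℕ) :
    (a + (i : Fin n)).val = (a.val + i) % n := by
  have h1 : (a + (i : Fin n)).val = (a.val + i % n) % n := by
    rw [Fin.add_def]; simp
  have h2 : (a.val + i % n) % n = (a.val + i) % n :=
    (Nat.mod_modEq i n).add_left a.val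
  rw [h1, h2]

lemma CGdist_eq [NeZero n] (hn : 2 ≤ n) (u v : Fin n) :
    (cycleGraph n).dist u v = CGcdist u v := by
  refine le_antisymm ?_ ?_
  · refine le_min ?_ ?_
    · have he : v + ((((u - v).val : ℕ)) : Fin n) = u := by
        rw [Fin.cast_val_eq_self]; ring
      have hd := SimpleGraph.dist_le
        (((CGascWalk hn v ((u - v).val)).copy rfl he).reverse)
      rwa [Walk.length_reverse, Walk.length_copy, CGascWalk_length] at hd
    · have he : u + ((((v - u).val : ℕ)) : Fin n) = v := by
        rw [Fin.cast_val_eq_self]; ring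
      have hd := SimpleGraph.dist_le ((CGascWalk hn u ((v - u).val)).copy rfl he)
      rwa [Walk.length_copy, CGascWalk_length] at hd
  · obtain ⟨m, rfl⟩ : ∃ m, n = m + 1 := ⟨n - 1, by omega⟩
    obtain ⟨p, hp⟩ := cycleGraph_connected.exists_walk_length_eq_dist u v
    rw [← hp]
    exact CGcdist_le_length p

lemma CGdist_mk [NeZero n] (hn : 2 ≤ n) {x y : ℕ} (hx : x < n) (hy : y < n) :
    (cycleGraph n).dist ⟨x, hx⟩ ⟨y, hy⟩
      = min (if y ≤ x then x - y else x + n - y) (if x ≤ y then y - x else y + n - x) := by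
  rw [CGdist_eq hn, CGcdist_eq]

lemma CGtwo_cdist_le (u v : Fin n) : 2 * CGcdist u v ≤ n := by
  rw [CGcdist_eq]
  have hu := u.2; have hv := v.2
  split_ifs <;> omega

lemma CGsplit {G : SimpleGraph (Fin n)} {u v x : Fin n} (p : G.Walk u v)
    (hp : G.IsGeodesic p) (hx : x ∈ p.support) :
    G.dist u x + G.dist x v ≤ G.dist u v := by
  have hsp := congrArg Walk.length (p.take_spec hx)
  rw [Walk.length_append] at hsp
  have h1 := SimpleGraph.dist_le (p.takeUntil x hx)
  have h2 := SimpleGraph.dist_le (p.dropUntil x hx)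
  rw [SimpleGraph.IsGeodesic] at hp
  omega

end CGHelpers


section CGTriangle
open SimpleGraph
open scoped Fin.NatCast Fin.CommRing

private lemma CGhe1 (k : ℕ) (hk : 1 ≤ k) [NeZero (4 * k)] :
    (⟨0, by have := NeZero.ne (4 * k); omega⟩ : Fin (4 * k)) + ((k : ℕ) : Fin (4 * k))
      = (⟨k, by have := NeZero.ne (4 * k); omega⟩ : Fin (4 * k)) := by
  apply Fin.ext
  rw [CGadd_natCast_val]
  show (0 + k) % (4 * k) = k
  rw [Nat.zero_add, Nat.mod_eq_of_lt (by omega)]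

private lemma CGhe2 (k : ℕ) (hk : 1 ≤ k) [NeZero (4 * k)] :
    (⟨3 * k, by have := NeZero.ne (4 * k); omega⟩ : Fin (4 * k)) + ((k : ℕ) : Fin (4 * k))
      = (⟨0, by have := NeZero.ne (4 * k); omega⟩ : Fin (4 * k)) := by
  apply Fin.ext
  rw [CGadd_natCast_val]
  show (3 * k + k) % (4 * k) = 0
  have h : 3 * k + k = 4 * k := by ring
  rw [h, Nat.mod_self]

private lemma CGhe3 (k : ℕ) (hk : 1 ≤ k) [NeZero (4 * k)] :
    (⟨k, by have := NeZero.ne (4 * k); omega⟩ : Fin (4 * k)) + ((2 * k : ℕ) : Fin (4 * k))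
      = (⟨3 * k, by have := NeZero.ne (4 * k); omega⟩ : Fin (4 * k)) := by
  apply Fin.ext
  rw [CGadd_natCast_val]
  show (k + 2 * k) % (4 * k) = 3 * k
  rw [Nat.mod_eq_of_lt (by have := NeZero.ne (4 * k); omega)]
  omega

def CGp1 (k : ℕ) (hk : 1 ≤ k) [NeZero (4 * k)] (hn : 2 ≤ 4 * k) :
    (cycleGraph (4 * k)).Walk ⟨0, by have := NeZero.ne (4 * k); omega⟩ ⟨k, by have := NeZero.ne (4 * k); omega⟩ :=
  (CGascWalk hn ⟨0, by have := NeZero.ne (4 * k); omega⟩ k).copy rfl (CGhe1 k hk)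

def CGp2 (k : ℕ) (hk : 1 ≤ k) [NeZero (4 * k)] (hn : 2 ≤ 4 * k) :
    (cycleGraph (4 * k)).Walk ⟨0, by have := NeZero.ne (4 * k); omega⟩ ⟨3 * k, by have := NeZero.ne (4 * k); omega⟩ :=
  ((CGascWalk hn ⟨3 * k, by have := NeZero.ne (4 * k); omega⟩ k).copy rfl (CGhe2 k hk)).reverse

def CGp3 (k : ℕ) (hk : 1 ≤ k) [NeZero (4 * k)] (hn : 2 ≤ 4 * k) :
    (cycleGraph (4 * k)).Walk ⟨k, by have := NeZero.ne (4 * k); omega⟩ ⟨3 * k, by have := NeZero.ne (4 * k); omega⟩ :=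
  (CGascWalk hn ⟨k, by have := NeZero.ne (4 * k); omega⟩ (2 * k)).copy rfl (CGhe3 k hk)

lemma CGp1_support (k : ℕ) (hk : 1 ≤ k) [NeZero (4 * k)] (hn : 2 ≤ 4 * k) :
    (CGp1 k hk hn).support = (List.range (k + 1)).map
      (fun i => (⟨i % (4 * k), Nat.mod_lt _ (by have := NeZero.ne (4 * k); omega)⟩ : Fin (4 * k))) := by
  unfold CGp1
  rw [Walk.support_copy, CGascWalk_support]
  congr 1
  funext i
  apply Fin.ext
  rw [CGadd_natCast_val]
  show (0 + i) % (4 * k) = i % (4 * k)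
  rw [Nat.zero_add]

lemma CGp2_support (k : ℕ) (hk : 1 ≤ k) [NeZero (4 * k)] (hn : 2 ≤ 4 * k) :
    (CGp2 k hk hn).support = ((List.range (k + 1)).map
      (fun i => (⟨(3 * k + i) % (4 * k), Nat.mod_lt _ (by have := NeZero.ne (4 * k); omega)⟩ : Fin (4 * k)))).reverse := by
  unfold CGp2
  rw [Walk.support_reverse, Walk.support_copy, CGascWalk_support]
  congr 1
  congr 1
  funext i
  apply Fin.ext
  rw [CGadd_natCast_val]

lemma CGp3_support (k : ℕ) (hk : 1 ≤ k) [NeZero (4 * k)] (hn : 2 ≤ 4 * k) :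
    (CGp3 k hk hn).support = (List.range (2 * k + 1)).map
      (fun i => (⟨(k + i) % (4 * k), Nat.mod_lt _ (by have := NeZero.ne (4 * k); omega)⟩ : Fin (4 * k))) := by
  unfold CGp3
  rw [Walk.support_copy, CGascWalk_support]
  congr 1
  funext i
  apply Fin.ext
  rw [CGadd_natCast_val]

lemma CGp1_isGeodesic (k : ℕ) (hk : 1 ≤ k) [NeZero (4 * k)] (hn : 2 ≤ 4 * k) :
    (cycleGraph (4 * k)).IsGeodesic (CGp1 k hk hn) := by
  unfold CGp1
  rw [SimpleGraph.IsGeodesic, Walk.length_copy, CGascWalk_length,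
    CGdist_mk hn (by have := NeZero.ne (4 * k); omega) (by have := NeZero.ne (4 * k); omega)]
  split_ifs <;> omega

lemma CGp2_isGeodesic (k : ℕ) (hk : 1 ≤ k) [NeZero (4 * k)] (hn : 2 ≤ 4 * k) :
    (cycleGraph (4 * k)).IsGeodesic (CGp2 k hk hn) := by
  unfold CGp2
  rw [SimpleGraph.IsGeodesic, Walk.length_reverse, Walk.length_copy, CGascWalk_length,
    CGdist_mk hn (by have := NeZero.ne (4 * k); omega) (by have := NeZero.ne (4 * k); omega)]
  split_ifs <;> omega

lemma CGp3_isGeodesic (k : ℕ) (hk : 1 ≤ k) [NeZero (4 * k)] (hn : 2 ≤ 4 * k) :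
    (cycleGraph (4 * k)).IsGeodesic (CGp3 k hk hn) := by
  unfold CGp3
  rw [SimpleGraph.IsGeodesic, Walk.length_copy, CGascWalk_length,
    CGdist_mk hn (by have := NeZero.ne (4 * k); omega) (by have := NeZero.ne (4 * k); omega)]
  split_ifs <;> omega

end CGTriangle

/-- For every `k ≥ 1` the cycle graph `C_{4k}` has
Gromov-hyperbolic curvature exactly `k`: (i) every geodesic triangle is `k`-thin, and
(ii) the geodesic triangle on vertices `0, k, 3k` whose sides are the arcs
`0,…,k`, `k,…,3k` and `3k,…,4k−1,0` has the midpoint `2k` of its second side at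
distance exactly `k` from the set of vertices of the other two sides, so it is not
`δ`-thin for any `δ < k`. -/
theorem gromovCurvature_cycleGraph (k : ℕ) (hk : 1 ≤ k) :
    (SimpleGraph.cycleGraph (4 * k)).gromovCurvature = (k : ℝ) ∧
    (∀ (u v w : Fin (4 * k)) (puv : (SimpleGraph.cycleGraph (4 * k)).Walk u v)
        (puw : (SimpleGraph.cycleGraph (4 * k)).Walk u w)
        (pvw : (SimpleGraph.cycleGraph (4 * k)).Walk v w),
      (SimpleGraph.cycleGraph (4 * k)).IsGeodesic puv →
      (SimpleGraph.cycleGraph (4 * k)).IsGeodesic puw →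
      (SimpleGraph.cycleGraph (4 * k)).IsGeodesic pvw →
      (SimpleGraph.cycleGraph (4 * k)).IsThinTriangle puv puw pvw (k : ℝ)) ∧
    (∃ (p₁ : (SimpleGraph.cycleGraph (4 * k)).Walk
          (⟨0, by omega⟩ : Fin (4 * k)) (⟨k, by omega⟩ : Fin (4 * k)))
       (p₂ : (SimpleGraph.cycleGraph (4 * k)).Walk
          (⟨0, by omega⟩ : Fin (4 * k)) (⟨3 * k, by omega⟩ : Fin (4 * k)))
       (p₃ : (SimpleGraph.cycleGraph (4 * k)).Walk
          (⟨k, by omega⟩ : Fin (4 * k)) (⟨3 * k, by omega⟩ : Fin (4 * k))),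
      (SimpleGraph.cycleGraph (4 * k)).IsGeodesic p₁ ∧
      (SimpleGraph.cycleGraph (4 * k)).IsGeodesic p₂ ∧
      (SimpleGraph.cycleGraph (4 * k)).IsGeodesic p₃ ∧
      -- the first side is the arc `0, 1, …, k`
      p₁.support = (List.range (k + 1)).map
        (fun i => (⟨i % (4 * k), Nat.mod_lt _ (by omega)⟩ : Fin (4 * k))) ∧
      -- the third listed arc `3k, 3k+1, …, 4k−1, 0`, traversed from `0` to `3k`
      p₂.support = ((List.range (k + 1)).map
        (fun i => (⟨(3 * k + i) % (4 * k), Nat.mod_lt _ (by omega)⟩ : Fin (4 * k)))).reverse ∧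
      -- the second side is the arc `k, k+1, …, 3k`
      p₃.support = (List.range (2 * k + 1)).map
        (fun i => (⟨(k + i) % (4 * k), Nat.mod_lt _ (by omega)⟩ : Fin (4 * k))) ∧
      -- the midpoint `2k` of the second side is at distance exactly `k`
      -- from the vertices of the other two sides
      (∀ y, y ∈ p₁.support ∨ y ∈ p₂.support →
        k ≤ (SimpleGraph.cycleGraph (4 * k)).dist (⟨2 * k, by omega⟩ : Fin (4 * k)) y) ∧
      (∃ y, (y ∈ p₁.support ∨ y ∈ p₂.support) ∧
        (SimpleGraph.cycleGraph (4 * k)).dist (⟨2 * k, by omega⟩ : Fin (4 * k)) y = k) ∧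
      -- hence this triangle is not `δ`-thin for any `δ < k`
      (∀ δ : ℝ, δ < (k : ℝ) →
        ¬ (SimpleGraph.cycleGraph (4 * k)).IsThinTriangle p₁ p₂ p₃ δ)) := by
  haveI : NeZero (4 * k) := ⟨by omega⟩
  have hn : 2 ≤ 4 * k := by omega
  have hdist2k : ∀ u v : Fin (4 * k), (SimpleGraph.cycleGraph (4 * k)).dist u v ≤ 2 * k := by
    intro u v
    rw [CGdist_eq hn]
    have := CGtwo_cdist_le u v
    omega
  -- Part (i): every geodesic triangle is k-thin
  have part1 : ∀ (u v w : Fin (4 * k))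
      (puv : (SimpleGraph.cycleGraph (4 * k)).Walk u v)
      (puw : (SimpleGraph.cycleGraph (4 * k)).Walk u w)
      (pvw : (SimpleGraph.cycleGraph (4 * k)).Walk v w),
      (SimpleGraph.cycleGraph (4 * k)).IsGeodesic puv →
      (SimpleGraph.cycleGraph (4 * k)).IsGeodesic puw →
      (SimpleGraph.cycleGraph (4 * k)).IsGeodesic pvw →
      (SimpleGraph.cycleGraph (4 * k)).IsThinTriangle puv puw pvw (k : ℝ) := by
    intro u v w puv puw pvw h1 h2 h3
    have key : ∀ (a b : Fin (4 * k)) (p : (SimpleGraph.cycleGraph (4 * k)).Walk a b),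
        (SimpleGraph.cycleGraph (4 * k)).IsGeodesic p → ∀ x ∈ p.support,
        (SimpleGraph.cycleGraph (4 * k)).dist x a ≤ k ∨
        (SimpleGraph.cycleGraph (4 * k)).dist x b ≤ k := by
      intro a b p hp x hx
      have hs := CGsplit p hp hx
      have h4 := hdist2k a b
      have hc1 := SimpleGraph.dist_comm (G := SimpleGraph.cycleGraph (4 * k)) (u := x) (v := a)
      have hc2 := SimpleGraph.dist_comm (G := SimpleGraph.cycleGraph (4 * k)) (u := x) (v := b)
      omega
    refine ⟨?_, ?_, ?_⟩
    · intro x hx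
      rcases key u v puv h1 x hx with h | h
      · exact ⟨u, Or.inl puw.start_mem_support, by exact_mod_cast h⟩
      · exact ⟨v, Or.inr pvw.start_mem_support, by exact_mod_cast h⟩
    · intro x hx
      rcases key u w puw h2 x hx with h | h
      · exact ⟨u, Or.inl puv.start_mem_support, by exact_mod_cast h⟩
      · exact ⟨w, Or.inr pvw.end_mem_support, by exact_mod_cast h⟩
    · intro x hx
      rcases key v w pvw h3 x hx with h | h
      · exact ⟨v, Or.inl puv.end_mem_support, by exact_mod_cast h⟩
      · exact ⟨w, Or.inr puw.end_mem_support, by exact_mod_cast h⟩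
  -- Part (iii): the explicit triangle on 0, k, 3k
  have hs1 := CGp1_support k hk hn
  have hs2 := CGp2_support k hk hn
  have hs3 := CGp3_support k hk hn
  have hg1 := CGp1_isGeodesic k hk hn
  have hg2 := CGp2_isGeodesic k hk hn
  have hg3 := CGp3_isGeodesic k hk hn
  -- far-away property of the two sides
  have hval : ∀ y : Fin (4 * k),
      (y ∈ (CGp1 k hk hn).support ∨ y ∈ (CGp2 k hk hn).support) →
      y.val ≤ k ∨ 3 * k ≤ y.val := by
    intro y hy
    rcases hy with hy | hy
    · rw [hs1] at hy
      obtain ⟨i, hi, rfl⟩ := List.mem_map.mp hy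
      rw [List.mem_range] at hi
      left
      show i % (4 * k) ≤ k
      rw [Nat.mod_eq_of_lt (by omega)]
      omega
    · rw [hs2, List.mem_reverse] at hy
      obtain ⟨i, hi, rfl⟩ := List.mem_map.mp hy
      rw [List.mem_range] at hi
      show (3 * k + i) % (4 * k) ≤ k ∨ 3 * k ≤ (3 * k + i) % (4 * k)
      rcases Nat.lt_or_ge i k with h | h
      · right
        rw [Nat.mod_eq_of_lt (by omega)]
        omega
      · left
        have h4 : 3 * k + i = 4 * k := by omega
        rw [h4, Nat.mod_self]
        omega
  have hfar : ∀ y : Fin (4 * k),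
      (y ∈ (CGp1 k hk hn).support ∨ y ∈ (CGp2 k hk hn).support) →
      k ≤ (SimpleGraph.cycleGraph (4 * k)).dist (⟨2 * k, by omega⟩ : Fin (4 * k)) y := by
    intro y hy
    have hv := hval y hy
    obtain ⟨m, hm⟩ := y
    simp only at hv
    rw [CGdist_mk hn (by omega) (by omega)]
    split_ifs <;> omega
  -- the non-thinness witness 2k lies on p₃
  have hmid : (⟨2 * k, by omega⟩ : Fin (4 * k)) ∈ (CGp3 k hk hn).support := by
    rw [hs3]
    refine List.mem_map.mpr ⟨k, List.mem_range.mpr (by omega), ?_⟩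
    apply Fin.ext
    show (k + k) % (4 * k) = 2 * k
    rw [Nat.mod_eq_of_lt (by omega)]
    omega
  have hnonthin : ∀ δ : ℝ, δ < (k : ℝ) →
      ¬ (SimpleGraph.cycleGraph (4 * k)).IsThinTriangle
        (CGp1 k hk hn) (CGp2 k hk hn) (CGp3 k hk hn) δ := by
    intro δ hδ hthin
    obtain ⟨-, -, h3⟩ := hthin
    obtain ⟨y, hy, hle⟩ := h3 _ hmid
    have hk' := hfar y hy
    have hcast : (k : ℝ) ≤ ((SimpleGraph.cycleGraph (4 * k)).dist
        (⟨2 * k, by omega⟩ : Fin (4 * k)) y : ℝ) := by exact_mod_cast hk'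
    linarith
  -- curvature computation
  have hmem : (k : ℝ) ∈ {δ : ℝ | 0 ≤ δ ∧
      ∀ (u v w : Fin (4 * k)) (puv : (SimpleGraph.cycleGraph (4 * k)).Walk u v)
        (puw : (SimpleGraph.cycleGraph (4 * k)).Walk u w)
        (pvw : (SimpleGraph.cycleGraph (4 * k)).Walk v w),
        (SimpleGraph.cycleGraph (4 * k)).IsGeodesic puv →
        (SimpleGraph.cycleGraph (4 * k)).IsGeodesic puw →
        (SimpleGraph.cycleGraph (4 * k)).IsGeodesic pvw →
        (SimpleGraph.cycleGraph (4 * k)).IsThinTriangle puv puw pvw δ} :=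
    ⟨by positivity, part1⟩
  have hlb : ∀ δ ∈ {δ : ℝ | 0 ≤ δ ∧
      ∀ (u v w : Fin (4 * k)) (puv : (SimpleGraph.cycleGraph (4 * k)).Walk u v)
        (puw : (SimpleGraph.cycleGraph (4 * k)).Walk u w)
        (pvw : (SimpleGraph.cycleGraph (4 * k)).Walk v w),
        (SimpleGraph.cycleGraph (4 * k)).IsGeodesic puv →
        (SimpleGraph.cycleGraph (4 * k)).IsGeodesic puw →
        (SimpleGraph.cycleGraph (4 * k)).IsGeodesic pvw →
        (SimpleGraph.cycleGraph (4 * k)).IsThinTriangle puv puw pvw δ},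
      (k : ℝ) ≤ δ := by
    rintro δ ⟨hδ0, hδ⟩
    by_contra hlt
    push_neg at hlt
    exact hnonthin δ hlt (hδ _ _ _ _ _ _ hg1 hg2 hg3)
  refine ⟨?_, part1, CGp1 k hk hn, CGp2 k hk hn, CGp3 k hk hn,
    hg1, hg2, hg3, hs1, hs2, hs3, hfar, ⟨⟨k, by omega⟩, Or.inl ?_, ?_⟩, hnonthin⟩
  · rw [SimpleGraph.gromovCurvature]
    exact le_antisymm (csInf_le ⟨(k : ℝ), fun y hy => hlb y hy⟩ hmem)
      (le_csInf ⟨(k : ℝ), hmem⟩ hlb)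
  · rw [hs1]
    refine List.mem_map.mpr ⟨k, List.mem_range.mpr (by omega), ?_⟩
    apply Fin.ext
    show k % (4 * k) = k
    rw [Nat.mod_eq_of_lt (by omega)]
  · rw [CGdist_mk hn (by omega) (by omega)]
    split_ifs <;> omega
end

section
/- Let n ≥ 1 and N ≥ n + 3 be integers, let K_N be the complete graph on N vertices, and let E_d be a set of edges of K_N such that the graph K_N ∖ E_d contains two vertices lying in the same connected component whose distance in K_N ∖ E_d is at least n + 2. Then |E_d| ≥ n·(N − n − 3). -/
open SimpleGraph Finset

private lemma edist_getVert_le' {V : Type*} {G : SimpleGraph V} {u v : V}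
    (p : G.Walk u v) (i : ℕ) : G.edist u (p.getVert i) ≤ i := by
  induction p generalizing i with
  | nil => simp [SimpleGraph.Walk.getVert]
  | @cons a b c h q ih =>
    cases i with
    | zero => simp
    | succ i =>
      rw [SimpleGraph.Walk.getVert_cons_succ]
      calc G.edist a (q.getVert i)
          ≤ G.edist a b + G.edist b (q.getVert i) := SimpleGraph.edist_triangle
        _ ≤ 1 + (i : ℕ∞) :=
            add_le_add (SimpleGraph.edist_eq_one_iff_adj.mpr h).le (ih i)
        _ = ((i + 1 : ℕ) : ℕ∞) := by push_cast; ring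

private lemma edist_getVert_right' {V : Type*} {G : SimpleGraph V} {u v : V}
    (p : G.Walk u v) (i : ℕ) : G.edist (p.getVert i) v ≤ ((p.length - i : ℕ) : ℕ∞) := by
  induction p generalizing i with
  | nil => simp [SimpleGraph.Walk.getVert]
  | @cons a b c h q ih =>
    cases i with
    | zero =>
      rw [SimpleGraph.Walk.getVert_zero]
      calc G.edist a c ≤ G.edist a b + G.edist b c := SimpleGraph.edist_triangle
        _ ≤ 1 + (q.length : ℕ∞) :=
            add_le_add (SimpleGraph.edist_eq_one_iff_adj.mpr h).le (G.edist_le q)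
        _ = (((q.cons h).length - 0 : ℕ) : ℕ∞) := by
            rw [SimpleGraph.Walk.length_cons]; push_cast; ring
    | succ i =>
      rw [SimpleGraph.Walk.getVert_cons_succ]
      calc G.edist (q.getVert i) c ≤ ((q.length - i : ℕ) : ℕ∞) := ih i
        _ = (((q.cons h).length - (i + 1) : ℕ) : ℕ∞) := by
            rw [SimpleGraph.Walk.length_cons]
            congr 1
            omega

/-- Let `n ≥ 1`, `N ≥ n + 3`, and let `E_d` be a set of edges of the
complete graph `K_N` such that `K_N ∖ E_d` has two vertices in the same connected
component at distance at least `n + 2`. Then `|E_d| ≥ n·(N − n − 3)`. -/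
theorem deleted_edges_lower_bound (n N : ℕ) (hn : 1 ≤ n) (hN : n + 3 ≤ N)
    (Ed : Set (Sym2 (Fin N))) (hEd : Ed ⊆ (⊤ : SimpleGraph (Fin N)).edgeSet)
    (h : ∃ u v : Fin N,
      ((⊤ : SimpleGraph (Fin N)).deleteEdges Ed).Reachable u v ∧
      n + 2 ≤ ((⊤ : SimpleGraph (Fin N)).deleteEdges Ed).dist u v) :
    n * (N - n - 3) ≤ Ed.ncard := by
  classical
  obtain ⟨u, v, hr, hd⟩ := h
  set G := (⊤ : SimpleGraph (Fin N)).deleteEdges Ed with hG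
  obtain ⟨p, hp⟩ := hr.exists_walk_length_eq_dist
  set x : ℕ → Fin N := fun i => p.getVert i with hx
  have hedist : G.edist u v = (G.dist u v : ℕ∞) := by
    rw [SimpleGraph.dist, ENat.coe_toNat]
    exact SimpleGraph.edist_ne_top_iff_reachable.mpr hr
  -- key : the first n+3 vertices of the shortest walk are at exact distance i from u
  have key : ∀ i, i ≤ n + 2 → G.edist u (x i) = (i : ℕ∞) := by
    intro i hi
    have hile : i ≤ p.length := by omega
    have h1 : G.edist u (x i) ≤ (i : ℕ∞) := edist_getVert_le' p i
    have hne : G.edist u (x i) ≠ ⊤ := by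
      intro ht
      rw [ht] at h1
      simp at h1
    lift G.edist u (x i) to ℕ using hne with k hk
    have h2 : (p.length : ℕ∞) ≤ (k : ℕ∞) + ((p.length - i : ℕ) : ℕ∞) := by
      calc (p.length : ℕ∞) = G.edist u v := by rw [hedist, hp]
        _ ≤ G.edist u (x i) + G.edist (x i) v := SimpleGraph.edist_triangle
        _ ≤ (k : ℕ∞) + ((p.length - i : ℕ) : ℕ∞) := by
            rw [← hk]; exact add_le_add le_rfl (edist_getVert_right' p i)
    have h2' : p.length ≤ k + (p.length - i) := by exact_mod_cast h2
    have h1' : k ≤ i := by exact_mod_cast h1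
    have : k = i := by omega
    rw [this]
  have hxinj : ∀ i ∈ Finset.range (n + 3), ∀ j ∈ Finset.range (n + 3),
      x i = x j → i = j := by
    intro i hi j hj hij
    simp only [Finset.mem_range] at hi hj
    have := key i (by omega)
    rw [hij, key j (by omega)] at this
    exact_mod_cast this.symm
  -- each vertex is adjacent to at most 3 of the first n+3 path vertices
  have hadj3 : ∀ w : Fin N,
      ((Finset.range (n + 3)).filter (fun i => G.Adj w (x i))).card ≤ 3 := by
    intro w
    by_cases hne : ((Finset.range (n + 3)).filter (fun i => G.Adj w (x i))).Nonempty
    · obtain ⟨i0, hi0⟩ := hne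
      simp only [Finset.mem_filter, Finset.mem_range] at hi0
      obtain ⟨hi0r, hi0a⟩ := hi0
      have hwx : G.edist w (x i0) = 1 := SimpleGraph.edist_eq_one_iff_adj.mpr hi0a
      have hle : G.edist u w ≤ (i0 : ℕ∞) + 1 := by
        calc G.edist u w ≤ G.edist u (x i0) + G.edist (x i0) w := SimpleGraph.edist_triangle
          _ = (i0 : ℕ∞) + 1 := by rw [key i0 (by omega), SimpleGraph.edist_comm, hwx]
      have hnet : G.edist u w ≠ ⊤ := by
        intro ht
        rw [ht, top_le_iff] at hle
        exact ENat.coe_ne_top (i0 + 1) (by push_cast; exact hle)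
      lift G.edist u w to ℕ using hnet with k hk
      have hsub : ((Finset.range (n + 3)).filter (fun i => G.Adj w (x i)))
          ⊆ {k - 1, k, k + 1} := by
        intro i hi
        simp only [Finset.mem_filter, Finset.mem_range] at hi
        obtain ⟨hir, hia⟩ := hi
        have hwx' : G.edist w (x i) = 1 := SimpleGraph.edist_eq_one_iff_adj.mpr hia
        have h1 : (i : ℕ∞) ≤ (k : ℕ∞) + 1 := by
          calc (i : ℕ∞) = G.edist u (x i) := (key i (by omega)).symm
            _ ≤ G.edist u w + G.edist w (x i) := SimpleGraph.edist_triangle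
            _ = (k : ℕ∞) + 1 := by rw [← hk, hwx']
        have h2 : (k : ℕ∞) ≤ (i : ℕ∞) + 1 := by
          calc (k : ℕ∞) = G.edist u w := hk
            _ ≤ G.edist u (x i) + G.edist (x i) w := SimpleGraph.edist_triangle
            _ = (i : ℕ∞) + 1 := by rw [key i (by omega), SimpleGraph.edist_comm, hwx']
        have h1' : i ≤ k + 1 := by exact_mod_cast h1
        have h2' : k ≤ i + 1 := by exact_mod_cast h2
        simp only [Finset.mem_insert, Finset.mem_singleton]
        omega
      calc ((Finset.range (n + 3)).filter (fun i => G.Adj w (x i))).card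
          ≤ ({k - 1, k, k + 1} : Finset ℕ).card := Finset.card_le_card hsub
        _ ≤ 3 := by
            apply le_trans (Finset.card_insert_le _ _)
            apply Nat.succ_le_succ
            apply le_trans (Finset.card_insert_le _ _)
            simp
    · rw [Finset.not_nonempty_iff_eq_empty] at hne
      rw [hne]; simp
  -- the set of path vertices
  set P : Finset (Fin N) := (Finset.range (n + 3)).image x with hP
  have hPcard : P.card = n + 3 := by
    rw [hP, Finset.card_image_of_injOn hxinj, Finset.card_range]
  -- deleted edges from w to the path
  set Tw : Fin N → Finset (Sym2 (Fin N)) := fun w =>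
    ((Finset.range (n + 3)).filter (fun i => ¬ G.Adj w (x i))).image
      (fun i => s(w, x i)) with hTw
  have hfin : Ed.Finite := Set.toFinite Ed
  -- Tw w consists of deleted edges
  have hTwsub : ∀ w ∉ P, Tw w ⊆ hfin.toFinset := by
    intro w hw e he
    simp only [hTw, Finset.mem_image, Finset.mem_filter, Finset.mem_range] at he
    obtain ⟨i, ⟨hir, hia⟩, rfl⟩ := he
    have hwx : w ≠ x i := by
      intro hww
      apply hw
      rw [hP]
      exact Finset.mem_image.mpr ⟨i, Finset.mem_range.mpr hir, hww.symm⟩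
    rw [Set.Finite.mem_toFinset]
    by_contra hmem
    exact hia (by rw [hG, SimpleGraph.deleteEdges_adj]; exact ⟨hwx, hmem⟩)
  have hTwcard : ∀ w ∉ P, n ≤ (Tw w).card := by
    intro w hw
    have hinj : ∀ i ∈ (Finset.range (n + 3)).filter (fun i => ¬ G.Adj w (x i)),
        ∀ j ∈ (Finset.range (n + 3)).filter (fun i => ¬ G.Adj w (x i)),
        s(w, x i) = s(w, x j) → i = j := by
      intro i hi j hj hij
      simp only [Finset.mem_filter, Finset.mem_range] at hi hj
      rw [Sym2.eq_iff] at hij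
      rcases hij with ⟨-, hxx⟩ | ⟨hw1, -⟩
      · exact hxinj i (Finset.mem_range.mpr hi.1) j (Finset.mem_range.mpr hj.1) hxx
      · refine absurd ?_ hw
        rw [hP]
        exact Finset.mem_image.mpr ⟨j, Finset.mem_range.mpr hj.1, hw1.symm⟩
    rw [hTw]
    simp only
    rw [Finset.card_image_of_injOn hinj]
    have := Finset.card_filter_add_card_filter_not
      (s := Finset.range (n + 3)) (p := fun i => G.Adj w (x i))
    have h3 := hadj3 w
    rw [Finset.card_range] at this
    omega
  -- the Tw w for distinct w ∉ P are disjoint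
  have hdisj : ∀ w ∈ Pᶜ, ∀ w' ∈ Pᶜ, w ≠ w' → Disjoint (Tw w) (Tw w') := by
    intro w hw w' hw' hww
    rw [Finset.mem_compl] at hw hw'
    rw [Finset.disjoint_left]
    intro e he he'
    simp only [hTw, Finset.mem_image, Finset.mem_filter, Finset.mem_range] at he he'
    obtain ⟨i, -, rfl⟩ := he
    obtain ⟨j, ⟨hjr, -⟩, hee⟩ := he'
    rw [Sym2.eq_iff] at hee
    rcases hee with ⟨hww', -⟩ | ⟨-, hxw⟩
    · exact hww hww'.symm
    · apply hw
      rw [hP]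
      exact Finset.mem_image.mpr ⟨j, Finset.mem_range.mpr hjr, hxw⟩
  have hbU : (Pᶜ.biUnion Tw) ⊆ hfin.toFinset := by
    intro e he
    rw [Finset.mem_biUnion] at he
    obtain ⟨w, hw, hew⟩ := he
    exact hTwsub w (Finset.mem_compl.mp hw) hew
  have hcard : (N - (n + 3)) * n ≤ (Pᶜ.biUnion Tw).card := by
    rw [Finset.card_biUnion hdisj]
    calc (N - (n + 3)) * n = Pᶜ.card * n := by
          rw [Finset.card_compl, hPcard, Fintype.card_fin]
      _ = ∑ _w ∈ Pᶜ, n := by rw [Finset.sum_const, smul_eq_mul]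
      _ ≤ ∑ w ∈ Pᶜ, (Tw w).card :=
          Finset.sum_le_sum (fun w hw => hTwcard w (Finset.mem_compl.mp hw))
  calc n * (N - n - 3) = (N - (n + 3)) * n := by rw [Nat.sub_sub, Nat.mul_comm]
    _ ≤ (Pᶜ.biUnion Tw).card := hcard
    _ ≤ hfin.toFinset.card := Finset.card_le_card hbU
    _ = Ed.ncard := (Set.ncard_eq_toFinset_card Ed hfin).symm
end

section
/- Let n be a positive even integer, let N = (n² + 5n)/2 + 4, and let E_d be a set of edges of the complete graph K_N such that the graph K_N ∖ E_d admits a geodesic triangle that is not δ-thin for any δ < n/2 + 1 (in particular this holds if K_N ∖ E_d is connected with C_Gromov(K_N ∖ E_d) ≥ n/2 + 1). Then |E_d| ≥ (n³ + 3n² + 2n)/2. -/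
open SimpleGraph

namespace DelEdgesAux

lemma walk_front {V : Type*} {G : SimpleGraph V} {a b : V} (p : G.Walk a b) (i : ℕ) :
    ∃ q : G.Walk a (p.getVert i), q.length ≤ i := by
  induction p generalizing i with
  | nil => exact ⟨Walk.nil, by simp⟩
  | @cons u v w h q ih =>
    cases i with
    | zero => exact ⟨Walk.nil, le_of_eq rfl⟩
    | succ i =>
      obtain ⟨r, hr⟩ := ih i
      exact ⟨Walk.cons h r, by simpa using Nat.succ_le_succ hr⟩

lemma walk_back {V : Type*} {G : SimpleGraph V} {a b : V} (p : G.Walk a b) (i : ℕ)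
    (hi : i ≤ p.length) : ∃ r : G.Walk (p.getVert i) b, r.length + i ≤ p.length := by
  induction p generalizing i with
  | nil =>
    have h0 : i = 0 := by simpa using hi
    subst h0
    exact ⟨Walk.nil, by simp⟩
  | @cons u v w h q ih =>
    cases i with
    | zero => exact ⟨Walk.cons h q, le_of_eq rfl⟩
    | succ i =>
      obtain ⟨r, hr⟩ := ih i (by simpa using Nat.lt_succ_iff.mp (Nat.lt_of_succ_le hi))
      refine ⟨r, ?_⟩
      simp only [Walk.length_cons] at hi ⊢
      change r.length + (i + 1) ≤ q.length + 1
      omega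

lemma geo_sep {V : Type*} {G : SimpleGraph V} {a b : V} {p : G.Walk a b}
    (hp : p.length = G.dist a b) {i j : ℕ} (_hij : i ≤ j) (hj : j ≤ p.length)
    {c d : V} (hc : c = p.getVert i) (hd : d = p.getVert j)
    (w : G.Walk c d) : j ≤ i + w.length := by
  subst hc; subst hd
  obtain ⟨q, hq⟩ := walk_front p i
  obtain ⟨r, hr⟩ := walk_back p j hj
  have h1 : G.dist a b ≤ ((q.append w).append r).length := SimpleGraph.dist_le _
  rw [Walk.length_append, Walk.length_append] at h1
  omega

lemma far_point {V : Type*} {G : SimpleGraph V} {a b x : V} {n : ℕ} (p : G.Walk a b)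
    (hx : x ∈ p.support) (ha : n + 2 ≤ 2 * G.dist x a) (hb : n + 2 ≤ 2 * G.dist x b) :
    n + 2 ≤ p.length := by
  obtain ⟨q, r, rfl⟩ := Walk.mem_support_iff_exists_append.mp hx
  have h1 : G.dist a x ≤ q.length := SimpleGraph.dist_le q
  have h2 : G.dist x b ≤ r.length := SimpleGraph.dist_le r
  have h3 : G.dist x a = G.dist a x := SimpleGraph.dist_comm
  rw [Walk.length_append]
  omega

lemma count_lemma (n : ℕ) {V : Type*} [Fintype V] [DecidableEq V] (Ed : Set (Sym2 V))
    {G : SimpleGraph V} (hadj : ∀ y z : V, y ≠ z → ¬ G.Adj y z → s(y, z) ∈ Ed)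
    {a b : V} (p : G.Walk a b)
    (hp : p.length = G.dist a b)
    (hlen : n + 2 ≤ p.length) :
    (Fintype.card V - (n + 3)) * n ≤ Ed.ncard := by
  classical
  set x : ℕ → V := p.getVert with hx
  have hinj : ∀ i ∈ Finset.range (n+3), ∀ j ∈ Finset.range (n+3), x i = x j → i = j := by
    intro i hi j hj hxe
    simp only [Finset.mem_range] at hi hj
    rcases le_total i j with hle | hle
    · have := geo_sep hp hle (by omega) (congrFun hx i) (congrFun hx j)
        ((Walk.nil : G.Walk (x i) (x i)).copy rfl hxe)
      simp only [Walk.length_copy, Walk.length_nil] at this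
      omega
    · have := geo_sep hp hle (by omega) (congrFun hx j) (congrFun hx i)
        ((Walk.nil : G.Walk (x j) (x j)).copy rfl hxe.symm)
      simp only [Walk.length_copy, Walk.length_nil] at this
      omega
  set K : Finset V := (Finset.range (n+3)).image x with hKdef
  have hK : K.card = n + 3 := by
    rw [hKdef, Finset.card_image_of_injOn (fun i hi j hj => hinj i (by simpa using hi) j (by simpa using hj)),
      Finset.card_range]
  have hadjK : ∀ z, z ∉ K → ((Finset.range (n+3)).filter (fun i => G.Adj z (x i))).card ≤ 3 := by
    intro z hz
    rcases ((Finset.range (n+3)).filter (fun i => G.Adj z (x i))).eq_empty_or_nonempty with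
      hAe | hAne
    · simp [hAe]
    · have hsub : (Finset.range (n+3)).filter (fun i => G.Adj z (x i)) ⊆
          Finset.Icc (((Finset.range (n+3)).filter (fun i => G.Adj z (x i))).min' hAne)
            (((Finset.range (n+3)).filter (fun i => G.Adj z (x i))).min' hAne + 2) := by
        intro j hj
        have hmem := Finset.min'_mem _ hAne
        have h1 := Finset.min'_le _ j hj
        have hm2 := Finset.mem_filter.mp hmem
        have hj2 := Finset.mem_filter.mp hj
        have hmr := Finset.mem_range.mp hm2.1
        have hjr := Finset.mem_range.mp hj2.1
        have h2 := geo_sep hp h1 (by omega) (congrFun hx _) (congrFun hx j)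
          (Walk.cons hm2.2.symm (Walk.cons hj2.2 Walk.nil))
        simp only [Walk.length_cons, Walk.length_nil] at h2
        rw [Finset.mem_Icc]
        omega
      calc ((Finset.range (n+3)).filter (fun i => G.Adj z (x i))).card
          ≤ (Finset.Icc _ _).card := Finset.card_le_card hsub
        _ ≤ 3 := by rw [Nat.card_Icc]; omega
  have hB : ∀ z, z ∉ K → n ≤ ((Finset.range (n+3)).filter (fun i => ¬ G.Adj z (x i))).card := by
    intro z hz
    have h1 := Finset.card_filter_add_card_filter_not
      (s := Finset.range (n+3)) (p := fun i => G.Adj z (x i))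
    rw [Finset.card_range] at h1
    have h3 := hadjK z hz
    omega
  set S : Finset (Sym2 V) := (Finset.univ \ K).biUnion
    (fun z => ((Finset.range (n+3)).filter (fun i => ¬ G.Adj z (x i))).image
      (fun i => s(z, x i))) with hS
  have hzK : ∀ z : V, z ∉ K → ∀ i ∈ Finset.range (n+3), z ≠ x i := by
    intro z hz i hi heq
    exact hz (Finset.mem_image.mpr ⟨i, hi, heq.symm⟩)
  have hdisj : ∀ z₁ ∈ Finset.univ \ K, ∀ z₂ ∈ Finset.univ \ K, z₁ ≠ z₂ →
      Disjoint (((Finset.range (n+3)).filter (fun i => ¬ G.Adj z₁ (x i))).image (fun i => s(z₁, x i)))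
        (((Finset.range (n+3)).filter (fun i => ¬ G.Adj z₂ (x i))).image (fun i => s(z₂, x i))) := by
    intro z₁ hz₁ z₂ hz₂ hne
    rw [Finset.mem_sdiff] at hz₁ hz₂
    rw [Finset.disjoint_left]
    intro e he1 he2
    obtain ⟨i, hi, rfl⟩ := Finset.mem_image.mp he1
    obtain ⟨j, hj, hej⟩ := Finset.mem_image.mp he2
    rw [Finset.mem_filter] at hi hj
    rcases Sym2.eq_iff.mp hej with ⟨h1, h2⟩ | ⟨h1, h2⟩
    · exact hne h1.symm
    · exact hzK z₁ hz₁.2 j hj.1 h2.symm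
  have hScard : (Finset.univ \ K).card * n ≤ S.card := by
    rw [hS, Finset.card_biUnion hdisj]
    have := Finset.card_nsmul_le_sum (Finset.univ \ K)
      (fun z => (((Finset.range (n+3)).filter (fun i => ¬ G.Adj z (x i))).image (fun i => s(z, x i))).card) n ?_
    · simpa [smul_eq_mul] using this
    · intro z hz
      rw [Finset.mem_sdiff] at hz
      have hinjim : Set.InjOn (fun i => s(z, x i))
          ↑((Finset.range (n+3)).filter (fun i => ¬ G.Adj z (x i))) := by
        intro i hi j hj hij
        simp only [Finset.coe_filter, Set.mem_setOf_eq, Finset.mem_range] at hi hj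
        rcases Sym2.eq_iff.mp hij with ⟨h1, h2⟩ | ⟨h1, h2⟩
        · exact hinj i (Finset.mem_range.mpr hi.1) j (Finset.mem_range.mpr hj.1) h2
        · exact absurd h1 (hzK z hz.2 j (Finset.mem_range.mpr hj.1))
      rw [Finset.card_image_of_injOn hinjim]
      exact hB z hz.2
  have hSsub : ∀ e ∈ S, e ∈ Ed := by
    intro e he
    rw [hS, Finset.mem_biUnion] at he
    obtain ⟨z, hz, he⟩ := he
    rw [Finset.mem_sdiff] at hz
    obtain ⟨i, hi, rfl⟩ := Finset.mem_image.mp he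
    rw [Finset.mem_filter] at hi
    exact hadj z (x i) (hzK z hz.2 i hi.1) hi.2
  haveI : Fintype Ed := Fintype.ofFinite _
  have hfin : S.card ≤ Ed.ncard := by
    rw [Set.ncard_eq_toFinset_card']
    exact Finset.card_le_card (fun e he => Set.mem_toFinset.mpr (hSsub e he))
  have hcard : (Finset.univ \ K).card = Fintype.card V - (n+3) := by
    rw [Finset.card_sdiff_of_subset (Finset.subset_univ K), Finset.card_univ, hK]
  calc (Fintype.card V - (n + 3)) * n = (Finset.univ \ K).card * n := by rw [hcard]
    _ ≤ S.card := hScard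
    _ ≤ Ed.ncard := hfin

end DelEdgesAux

/-- Let `n` be a positive even integer, `N = (n² + 5n)/2 + 4`, and
let `E_d` be a set of edges of `K_N` such that `K_N ∖ E_d` admits a geodesic triangle
that is not `δ`-thin for any `δ < n/2 + 1`. Then `|E_d| ≥ (n³ + 3n² + 2n)/2`. -/
theorem deleted_edges_lower_bound_of_not_thin (n : ℕ) (hn : Even n) (hpos : 0 < n)
    (Ed : Set (Sym2 (Fin ((n ^ 2 + 5 * n) / 2 + 4))))
    (hEd : Ed ⊆ (⊤ : SimpleGraph (Fin ((n ^ 2 + 5 * n) / 2 + 4))).edgeSet)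
    (h : ∃ (u v w : Fin ((n ^ 2 + 5 * n) / 2 + 4))
        (puv : ((⊤ : SimpleGraph (Fin ((n ^ 2 + 5 * n) / 2 + 4))).deleteEdges Ed).Walk u v)
        (puw : ((⊤ : SimpleGraph (Fin ((n ^ 2 + 5 * n) / 2 + 4))).deleteEdges Ed).Walk u w)
        (pvw : ((⊤ : SimpleGraph (Fin ((n ^ 2 + 5 * n) / 2 + 4))).deleteEdges Ed).Walk v w),
      ((⊤ : SimpleGraph (Fin ((n ^ 2 + 5 * n) / 2 + 4))).deleteEdges Ed).IsGeodesic puv ∧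
      ((⊤ : SimpleGraph (Fin ((n ^ 2 + 5 * n) / 2 + 4))).deleteEdges Ed).IsGeodesic puw ∧
      ((⊤ : SimpleGraph (Fin ((n ^ 2 + 5 * n) / 2 + 4))).deleteEdges Ed).IsGeodesic pvw ∧
      ∀ δ : ℝ, 0 ≤ δ → δ < (n : ℝ) / 2 + 1 →
        ¬ ((⊤ : SimpleGraph (Fin ((n ^ 2 + 5 * n) / 2 + 4))).deleteEdges
            Ed).IsThinTriangle puv puw pvw δ) :
    (n ^ 3 + 3 * n ^ 2 + 2 * n) / 2 ≤ Ed.ncard := by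
  classical
  set G := ((⊤ : SimpleGraph (Fin ((n ^ 2 + 5 * n) / 2 + 4))).deleteEdges Ed) with hG
  obtain ⟨u, v, w, puv, puw, pvw, h1, h2, h3, hthin⟩ := h
  obtain ⟨k, hk⟩ := hn
  have hnk : n = 2 * k := by omega
  have hδ := hthin ((n : ℝ) / 2) (by positivity)
    (by linarith [Nat.cast_nonneg (α := ℝ) n])
  have conv : ∀ {x y : Fin ((n ^ 2 + 5 * n) / 2 + 4)},
      (n : ℝ) / 2 < (G.dist x y : ℝ) → n + 2 ≤ 2 * G.dist x y := by
    intro x y hxy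
    have h' : (n : ℝ) < 2 * (G.dist x y : ℝ) := by linarith
    have h'' : n < 2 * G.dist x y := by exact_mod_cast h'
    omega
  simp only [SimpleGraph.IsThinTriangle, SimpleGraph.ThinSide, not_and_or] at hδ
  obtain ⟨a, b, p, hgeo, hlen⟩ : ∃ (a b : Fin ((n ^ 2 + 5 * n) / 2 + 4)) (p : G.Walk a b),
      p.length = G.dist a b ∧ n + 2 ≤ p.length := by
    rcases hδ with hδ | hδ | hδ
    · push_neg at hδ
      obtain ⟨x, hxs, hfar⟩ := hδ
      exact ⟨u, v, puv, h1, DelEdgesAux.far_point puv hxs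
        (conv (hfar u (Or.inl puw.start_mem_support)))
        (conv (hfar v (Or.inr pvw.start_mem_support)))⟩
    · push_neg at hδ
      obtain ⟨x, hxs, hfar⟩ := hδ
      exact ⟨u, w, puw, h2, DelEdgesAux.far_point puw hxs
        (conv (hfar u (Or.inl puv.start_mem_support)))
        (conv (hfar w (Or.inr pvw.end_mem_support)))⟩
    · push_neg at hδ
      obtain ⟨x, hxs, hfar⟩ := hδ
      exact ⟨v, w, pvw, h3, DelEdgesAux.far_point pvw hxs
        (conv (hfar v (Or.inl puv.end_mem_support)))
        (conv (hfar w (Or.inr puw.end_mem_support)))⟩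
  have hadj : ∀ y z : Fin ((n ^ 2 + 5 * n) / 2 + 4), y ≠ z → ¬ G.Adj y z → s(y, z) ∈ Ed := by
    intro y z hne hnadj
    by_contra hmem
    exact hnadj (by simp [hG, SimpleGraph.deleteEdges_adj, SimpleGraph.top_adj, hne, hmem])
  have hcount := DelEdgesAux.count_lemma n Ed hadj p hgeo hlen
  rw [Fintype.card_fin] at hcount
  refine le_trans ?_ hcount
  have e2 : (n ^ 2 + 5 * n) / 2 = 2 * (k * k) + 5 * k := by
    rw [hnk]
    have e : (2 * k) ^ 2 + 5 * (2 * k) = (2 * (k * k) + 5 * k) * 2 := by ring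
    rw [e, Nat.mul_div_cancel _ two_pos]
  have e3 : (n ^ 3 + 3 * n ^ 2 + 2 * n) / 2 = 4 * (k * k * k) + 6 * (k * k) + 2 * k := by
    rw [hnk]
    have e : (2 * k) ^ 3 + 3 * (2 * k) ^ 2 + 2 * (2 * k)
        = (4 * (k * k * k) + 6 * (k * k) + 2 * k) * 2 := by ring
    rw [e, Nat.mul_div_cancel _ two_pos]
  rw [e2, e3, hnk]
  have e4 : 2 * (k * k) + 5 * k + 4 - (2 * k + 3) = 2 * (k * k) + 3 * k + 1 :=
    Nat.sub_eq_of_eq_add (by ring)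
  rw [e4]
  exact le_of_eq (by ring)
end

section
/- Let G = (V, E) be a graph with vertices u₁, …, u_n (n ≥ 2) and edges e₁, …, e_m, and let G₁ = (V', E₁) and G₂ = (V', E₂) be the graphs of the construction described in the context. Then the minimum number of edges whose deletion from G leaves a triangle-free graph equals the minimum cardinality of a set E₃ ⊆ E₁ ∖ E₂ such that C²₃(G₁ ∖ E₃) = C²₃(G₂); that is, OPT_TDP(G) = OPT_TADP_{C²₃}(G₁, G₂). -/
/-- The set of cycles of `H` with at most `d` vertices; a cycle (as a subgraph)
is identified with its finite set of edges. -/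
def SimpleGraph.cyclesUpTo {V : Type*} [DecidableEq V] (d : ℕ) (H : SimpleGraph V) :
    Set (Finset (Sym2 V)) :=
  {s | (∃ (v : V) (w : H.Walk v v), w.IsCycle ∧ w.edges.toFinset = s) ∧ s.card ≤ d}

/-- The geometric curvature `C²_d(H) = |V| − |E| + c_d(H)`. -/
noncomputable def SimpleGraph.geomCurv {V : Type*} [Fintype V] [DecidableEq V]
    (d : ℕ) (H : SimpleGraph V) : ℤ :=
  (Fintype.card V : ℤ) - (H.edgeSet.ncard : ℤ) + ((H.cyclesUpTo d).ncard : ℤ)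

section Helpers

open SimpleGraph

lemma cyclesUpTo_three_eq {V : Type*} [DecidableEq V] (H : SimpleGraph V) :
    H.cyclesUpTo 3 =
      {s | ∃ a b c, H.Adj a b ∧ H.Adj b c ∧ H.Adj c a ∧ s = {s(a,b), s(b,c), s(c,a)}} := by
  ext s
  constructor
  · rintro ⟨⟨v, w, hc, rfl⟩, hcard⟩
    have hnd := hc.edges_nodup
    have hlen : w.edges.length = w.length := w.length_edges
    rw [List.toFinset_card_of_nodup hnd, hlen] at hcard
    have h3 := hc.three_le_length
    have hlen3 : w.length = 3 := le_antisymm hcard h3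
    clear hcard h3 hnd hlen
    match w, hlen3 with
    | SimpleGraph.Walk.cons hab (SimpleGraph.Walk.cons hbc (SimpleGraph.Walk.cons hca SimpleGraph.Walk.nil)), _ =>
      exact ⟨_, _, _, hab, hbc, hca, by simp [SimpleGraph.Walk.edges]⟩
  · rintro ⟨a, b, c, hab, hbc, hca, rfl⟩
    have hne1 : a ≠ b := hab.ne
    have hne2 : b ≠ c := hbc.ne
    have hne3 : c ≠ a := hca.ne
    refine ⟨⟨a, SimpleGraph.Walk.cons hab (SimpleGraph.Walk.cons hbc (SimpleGraph.Walk.cons hca SimpleGraph.Walk.nil)), ?_, ?_⟩, ?_⟩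
    · constructor
      · constructor
        · constructor
          simp [SimpleGraph.Walk.edges, Sym2.eq_iff]
          refine ⟨⟨?_, ?_⟩, ?_⟩ <;> tauto
        · simp
      · simp [SimpleGraph.Walk.support]
        refine ⟨⟨?_, ?_⟩, ?_⟩ <;> tauto
    · simp [SimpleGraph.Walk.edges]
    · refine (Finset.card_insert_le _ _).trans ?_
      exact Nat.succ_le_succ ((Finset.card_insert_le _ _).trans (by simp))

lemma cliqueFree_three_iff {V : Type*} (H : SimpleGraph V) :
    H.CliqueFree 3 ↔ ∀ a b c : V, H.Adj a b → H.Adj b c → H.Adj c a → False := by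
  classical
  constructor
  · intro h a b c hab hbc hca
    exact (SimpleGraph.is3Clique_triple_iff.2 ⟨hab, hca.symm, hbc⟩).not_cliqueFree h
  · intro h s hs
    rw [SimpleGraph.is3Clique_iff] at hs
    obtain ⟨a, b, c, hab, hac, hbc, -⟩ := hs
    exact h a b c hab hbc hac.symm

lemma sym2_eq_of_mem {α : Type*} {z : Sym2 α} {i j : α} (hi : i ∈ z) (hj : j ∈ z)
    (hij : i ≠ j) : z = s(i, j) := by
  induction z using Sym2.ind with
  | _ a b =>
    rw [Sym2.mem_iff] at hi hj
    rcases hi with rfl | rfl <;> rcases hj with rfl | rfl <;>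
      first | exact absurd rfl hij | rfl | exact Sym2.eq_swap

lemma finset_perm3 {α : Type*} [DecidableEq α] (x y z : α) :
    ({x, y, z} : Finset α) = {y, z, x} := by ext; simp; tauto

lemma finset_swap23 {α : Type*} [DecidableEq α] (x y z : α) :
    ({x, y, z} : Finset α) = {x, z, y} := by ext; simp; tauto

end Helpers
namespace Stmt11

variable (n : ℕ) (G : SimpleGraph (Fin n)) [DecidableRel G.Adj]

/-- Index type for the edges of `G`. -/
abbrev EdgeIdx := {e : Sym2 (Fin n) // e ∈ G.edgeFinset}

/-- The vertex set `V'` of the construction: a vertex `v_i` for each vertex `u_i` of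
`G`, two vertices `w_i¹, w_i²` for each `1 ≤ i ≤ n−1`, and a vertex `v_{ij}` for each
edge `{u_i, u_j}` of `G`. -/
abbrev Vc := Fin n ⊕ ((Fin (n - 1) × Fin 2) ⊕ EdgeIdx n G)

/-- `v_i` viewed in `Fin n` for `i : Fin (n-1)`. -/
def lo (i : Fin (n - 1)) : Fin n := ⟨i.1, by have := i.isLt; omega⟩

/-- `v_{i+1}` viewed in `Fin n` for `i : Fin (n-1)`. -/
def hi (i : Fin (n - 1)) : Fin n := ⟨i.1 + 1, by have := i.isLt; omega⟩

/-- The 'original' edges `{v_i, v_j}` for `{u_i, u_j} ∈ E`. -/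
def originalEdges : Set (Sym2 (Vc n G)) := Sym2.map Sum.inl '' G.edgeSet

/-- The 'connectivity' edges `{v_i, w_i¹}, {w_i¹, w_i²}, {w_i², v_{i+1}}`. -/
def connEdges : Set (Sym2 (Vc n G)) :=
  {p | ∃ i : Fin (n - 1),
    p = s(Sum.inl (lo n i), Sum.inr (Sum.inl (i, 0))) ∨
    p = s(Sum.inr (Sum.inl (i, 0)), Sum.inr (Sum.inl (i, 1))) ∨
    p = s(Sum.inr (Sum.inl (i, 1)), Sum.inl (hi n i))}

/-- The 'triangle-creation' edges `{v_i, v_{ij}}` and `{v_{ij}, v_j}`. -/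
def triEdges : Set (Sym2 (Vc n G)) :=
  {p | ∃ (e : EdgeIdx n G) (i : Fin n), i ∈ e.1 ∧ p = s(Sum.inl i, Sum.inr (Sum.inr e))}

/-- The edge set `E₁` of the constructed graph `G₁`. -/
def E1 : Set (Sym2 (Vc n G)) := originalEdges n G ∪ connEdges n G ∪ triEdges n G

/-- `E₂ = E₁` minus the original edges. -/
def E2 : Set (Sym2 (Vc n G)) := E1 n G \ originalEdges n G

/-- The constructed graph `G₁ = (V', E₁)`. -/
def G1 : SimpleGraph (Vc n G) := SimpleGraph.fromEdgeSet (E1 n G)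

/-- The constructed graph `G₂ = (V', E₂)`. -/
def G2 : SimpleGraph (Vc n G) := SimpleGraph.fromEdgeSet (E2 n G)

/-- The optimum of the triangle deletion problem for `G`: the minimum number of edges
whose deletion makes `G` triangle-free. -/
noncomputable def optTDP : ℕ∞ :=
  sInf {m : ℕ∞ | ∃ E' ⊆ G.edgeSet, (E'.ncard : ℕ∞) = m ∧
    (G.deleteEdges E').CliqueFree 3}

/-- The optimum of the targeted anomaly detection problem for `(G₁, G₂)` with the
geometric curvature `C²₃`. -/
noncomputable def optTADP : ℕ∞ :=
  sInf {m : ℕ∞ | ∃ E₃ ⊆ E1 n G \ E2 n G, (E₃.ncard : ℕ∞) = m ∧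
    ((G1 n G).deleteEdges E₃).geomCurv 3 = (G2 n G).geomCurv 3}





open SimpleGraph Sum

variable (n : ℕ) (G : SimpleGraph (Fin n)) [DecidableRel G.Adj]

lemma lo_ne_hi (i : Fin (n-1)) : lo n i ≠ hi n i := by
  intro h
  have := congrArg Fin.val h
  simp [lo, hi] at this

lemma mem_originalEdges {p : Sym2 (Vc n G)} :
    p ∈ originalEdges n G ↔ ∃ i j, G.Adj i j ∧ p = s(Sum.inl i, Sum.inl j) := by
  constructor
  · rintro ⟨e, he, rfl⟩
    induction e using Sym2.ind with
    | _ i j => exact ⟨i, j, he, by simp [Sym2.map_pair_eq]⟩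
  · rintro ⟨i, j, hij, rfl⟩
    exact ⟨s(i,j), hij, by simp [Sym2.map_pair_eq]⟩

lemma orig_subset_E1 : originalEdges n G ⊆ E1 n G := fun p hp => Or.inl (Or.inl hp)

lemma E1_diff_E2 : E1 n G \ E2 n G = originalEdges n G := by
  rw [E2, Set.diff_diff_right_self]
  exact Set.inter_eq_right.mpr (orig_subset_E1 n G)

lemma E1_not_diag {p : Sym2 (Vc n G)} (hp : p ∈ E1 n G) : ¬ p.IsDiag := by
  rcases hp with (h | h) | h
  · rw [mem_originalEdges] at h
    obtain ⟨i, j, hij, rfl⟩ := h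
    simp [Sym2.mk_isDiag_iff, hij.ne]
  · obtain ⟨i, h | h | h⟩ := h <;> subst h <;> simp [Sym2.mk_isDiag_iff]
  · obtain ⟨e, i, -, rfl⟩ := h
    simp [Sym2.mk_isDiag_iff]

lemma G2_eq : G2 n G = (G1 n G).deleteEdges (originalEdges n G) := by
  ext x y
  simp only [G2, G1, E2, SimpleGraph.fromEdgeSet_adj, SimpleGraph.deleteEdges_adj,
    Set.mem_diff]
  tauto

/-- The graph `G₁ ∖ E₃` for `E₃` the image of `E'`. -/
def Hgr (E' : Set (Sym2 (Fin n))) : SimpleGraph (Vc n G) :=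
  (G1 n G).deleteEdges (Sym2.map Sum.inl '' E')

section Adj

variable {E' : Set (Sym2 (Fin n))}


lemma adj_H_iff {x y : Vc n G} :
    (Hgr n G E').Adj x y ↔ (s(x,y) ∈ E1 n G ∧ x ≠ y) ∧ s(x,y) ∉ Sym2.map Sum.inl '' E' := by
  simp [Hgr, G1, SimpleGraph.deleteEdges_adj, SimpleGraph.fromEdgeSet_adj]
  intro _ hne
  exact ⟨fun h a ha he => hne (h a ha he), fun h a ha he => (h a ha he).elim⟩

lemma map_inl_mem_image_iff {E'' : Set (Sym2 (Fin n))} {i j : Fin n} :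
    s((Sum.inl i : Vc n G), Sum.inl j) ∈ Sym2.map Sum.inl '' E'' ↔ s(i, j) ∈ E'' := by
  constructor
  · rintro ⟨e, he, heq⟩
    induction e using Sym2.ind with
    | _ a b =>
      rw [Sym2.map_pair_eq, Sym2.eq_iff] at heq
      rcases heq with ⟨h1, h2⟩ | ⟨h1, h2⟩ <;>
        · cases Sum.inl_injective h1; cases Sum.inl_injective h2
          first | exact he | exact (Sym2.eq_swap ▸ he)
  · intro h
    exact ⟨s(i,j), h, by simp [Sym2.map_pair_eq]⟩

lemma not_inl_inr_mem_image {E'' : Set (Sym2 (Fin n))} {x : Vc n G}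
    {y : (Fin (n-1) × Fin 2) ⊕ EdgeIdx n G} :
    s(x, Sum.inr y) ∉ Sym2.map Sum.inl '' E'' := by
  rintro ⟨e, -, heq⟩
  induction e using Sym2.ind with
  | _ a b =>
    rw [Sym2.map_pair_eq, Sym2.eq_iff] at heq
    rcases heq with ⟨-, h⟩ | ⟨h, -⟩ <;> exact Sum.inl_ne_inr h

lemma adj_inl_inl {i j : Fin n} :
    (Hgr n G E').Adj (Sum.inl i) (Sum.inl j) ↔ (G.deleteEdges E').Adj i j := by
  rw [adj_H_iff]
  simp only [SimpleGraph.deleteEdges_adj]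
  constructor
  · rintro ⟨⟨h1, h2⟩, h3⟩
    rw [map_inl_mem_image_iff] at h3
    refine ⟨?_, h3⟩
    rcases h1 with (h | h) | h
    · rw [mem_originalEdges] at h
      obtain ⟨a, b, hab, heq⟩ := h
      rw [Sym2.eq_iff] at heq
      rcases heq with ⟨ha, hb⟩ | ⟨ha, hb⟩ <;>
        · cases Sum.inl_injective ha; cases Sum.inl_injective hb
          first | exact hab | exact hab.symm
    · obtain ⟨a, h | h | h⟩ := h <;> rw [Sym2.eq_iff] at h <;>
        rcases h with ⟨h1', h2'⟩ | ⟨h1', h2'⟩ <;> simp_all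
    · obtain ⟨e, a, -, h⟩ := h
      rw [Sym2.eq_iff] at h
      rcases h with ⟨h1', h2'⟩ | ⟨h1', h2'⟩ <;> simp_all
  · rintro ⟨h1, h2⟩
    refine ⟨⟨orig_subset_E1 n G ((mem_originalEdges n G).mpr ⟨i, j, h1, rfl⟩),
      by simpa using h1.ne⟩, ?_⟩
    rw [map_inl_mem_image_iff]
    exact h2

lemma adj_inl_edge {i : Fin n} {e : EdgeIdx n G} :
    (Hgr n G E').Adj (Sum.inl i) (Sum.inr (Sum.inr e)) ↔ i ∈ e.1 := by
  rw [adj_H_iff]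
  constructor
  · rintro ⟨⟨h1, -⟩, -⟩
    rcases h1 with (h | h) | h
    · rw [mem_originalEdges] at h
      obtain ⟨a, b, -, heq⟩ := h
      rw [Sym2.eq_iff] at heq
      rcases heq with ⟨-, h⟩ | ⟨-, h⟩ <;> simp at h
    · obtain ⟨a, h | h | h⟩ := h <;> rw [Sym2.eq_iff] at h <;>
        rcases h with ⟨h1', h2'⟩ | ⟨h1', h2'⟩ <;> simp_all
    · obtain ⟨e', a, ha, h⟩ := h
      rw [Sym2.eq_iff] at h
      rcases h with ⟨h1', h2'⟩ | ⟨h1', h2'⟩ <;> simp_all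
  · intro h
    exact ⟨⟨Or.inr ⟨e, i, h, rfl⟩, by simp⟩, not_inl_inr_mem_image n G⟩

lemma not_adj_inr_edge {y : (Fin (n-1) × Fin 2) ⊕ EdgeIdx n G} {e : EdgeIdx n G} :
    ¬ (Hgr n G E').Adj (Sum.inr y) (Sum.inr (Sum.inr e)) := by
  rw [adj_H_iff]
  rintro ⟨⟨h1, -⟩, -⟩
  rcases h1 with (h | h) | h
  · rw [mem_originalEdges] at h
    obtain ⟨a, b, -, heq⟩ := h
    rw [Sym2.eq_iff] at heq
    rcases heq with ⟨h1', h2'⟩ | ⟨h1', h2'⟩ <;> simp_all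
  · obtain ⟨a, h | h | h⟩ := h <;> rw [Sym2.eq_iff] at h <;>
      rcases h with ⟨h1', h2'⟩ | ⟨h1', h2'⟩ <;> simp_all
  · obtain ⟨e', a, -, h⟩ := h
    rw [Sym2.eq_iff] at h
    rcases h with ⟨h1', h2'⟩ | ⟨h1', h2'⟩ <;> simp_all

lemma adj_w {x : Vc n G} {i : Fin (n-1)} {b : Fin 2} (h : (Hgr n G E').Adj x (Sum.inr (Sum.inl (i, b)))) :
    (b = 0 ∧ (x = Sum.inl (lo n i) ∨ x = Sum.inr (Sum.inl (i, 1)))) ∨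
    (b = 1 ∧ (x = Sum.inr (Sum.inl (i, 0)) ∨ x = Sum.inl (hi n i))) := by
  rw [adj_H_iff] at h
  obtain ⟨⟨h1, -⟩, -⟩ := h
  rcases h1 with (h | h) | h
  · rw [mem_originalEdges] at h
    obtain ⟨a, c, -, heq⟩ := h
    rw [Sym2.eq_iff] at heq
    rcases heq with ⟨-, h'⟩ | ⟨-, h'⟩ <;> simp at h'
  · obtain ⟨a, h | h | h⟩ := h <;> rw [Sym2.eq_iff] at h <;>
      rcases h with ⟨h1', h2'⟩ | ⟨h1', h2'⟩ <;> simp_all <;> aesop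
  · obtain ⟨e', a, -, h⟩ := h
    rw [Sym2.eq_iff] at h
    rcases h with ⟨h1', h2'⟩ | ⟨h1', h2'⟩ <;> simp_all

lemma not_adj_lo_w1 {i : Fin (n-1)} :
    ¬ (Hgr n G E').Adj (Sum.inl (lo n i)) (Sum.inr (Sum.inl (i, 1))) := by
  intro h
  rcases adj_w n G h with ⟨h0, -⟩ | ⟨-, hc | hc⟩
  · exact absurd h0 (by simp [Fin.ext_iff])
  · simp at hc
  · exact lo_ne_hi n i (by simpa using hc)

lemma not_adj_hi_w0 {i : Fin (n-1)} :
    ¬ (Hgr n G E').Adj (Sum.inl (hi n i)) (Sum.inr (Sum.inl (i, 0))) := by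
  intro h
  rcases adj_w n G h with ⟨-, hc | hc⟩ | ⟨h0, -⟩
  · exact lo_ne_hi n i (by simpa using hc.symm)
  · simp at hc
  · exact absurd h0 (by simp [Fin.ext_iff])

lemma not_w_triangle {p : Fin (n-1) × Fin 2} {x y : Vc n G}
    (h1 : (Hgr n G E').Adj x (Sum.inr (Sum.inl p))) (h2 : (Hgr n G E').Adj y (Sum.inr (Sum.inl p)))
    (h3 : (Hgr n G E').Adj x y) : False := by
  obtain ⟨i, b⟩ := p
  have hxy : x ≠ y := h3.ne
  rcases adj_w n G h1 with ⟨rfl, hx⟩ | ⟨rfl, hx⟩ <;>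
    rcases adj_w n G h2 with ⟨hb, hy⟩ | ⟨hb, hy⟩
  · rcases hx with rfl | rfl <;> rcases hy with rfl | rfl
    · exact hxy rfl
    · exact not_adj_lo_w1 n G h3
    · exact not_adj_lo_w1 n G h3.symm
    · exact hxy rfl
  · exact absurd hb (by simp [Fin.ext_iff])
  · exact absurd hb (by simp [Fin.ext_iff])
  · rcases hx with rfl | rfl <;> rcases hy with rfl | rfl
    · exact hxy rfl
    · exact not_adj_hi_w0 n G h3.symm
    · exact not_adj_hi_w0 n G h3
    · exact hxy rfl

end Adj


lemma finset_swap12 {α : Type*} [DecidableEq α] (x y z : α) :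
    ({x, y, z} : Finset α) = {y, x, z} := by ext; simp; tauto

lemma finset_rev {α : Type*} [DecidableEq α] (x y z : α) :
    ({x, y, z} : Finset α) = {z, y, x} := by ext; simp; tauto

section Count

variable {E' : Set (Sym2 (Fin n))}

/-- Edge-sets of triangles of `G₁ ∖ E₃` lying among the original vertices. -/
def SA (E' : Set (Sym2 (Fin n))) : Set (Finset (Sym2 (Vc n G))) :=
  {s | ∃ i j k, (G.deleteEdges E').Adj i j ∧ (G.deleteEdges E').Adj j k ∧
    (G.deleteEdges E').Adj k i ∧
    s = {s(Sum.inl i, Sum.inl j), s(Sum.inl j, Sum.inl k), s(Sum.inl k, Sum.inl i)}}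

/-- Edge-sets of triangles of `G₁ ∖ E₃` through an edge-vertex. -/
def SB (E' : Set (Sym2 (Fin n))) : Set (Finset (Sym2 (Vc n G))) :=
  {s | ∃ e : EdgeIdx n G, ∃ i j, (G.deleteEdges E').Adj i j ∧ e.1 = s(i, j) ∧
    s = {s(Sum.inl i, Sum.inl j), s(Sum.inl i, Sum.inr (Sum.inr e)),
      s(Sum.inl j, Sum.inr (Sum.inr e))}}

lemma cycles_H_eq : (Hgr n G E').cyclesUpTo 3 = SA n G E' ∪ SB n G E' := by
  rw [cyclesUpTo_three_eq]
  ext s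
  constructor
  · rintro ⟨a, b, c, hab, hbc, hca, rfl⟩
    rcases a with ia | pa | ea
    · rcases b with ib | pb | eb
      · rcases c with ic | pc | ec
        · -- all original
          exact Or.inl ⟨ia, ib, ic, (adj_inl_inl n G).mp hab, (adj_inl_inl n G).mp hbc,
            (adj_inl_inl n G).mp hca, rfl⟩
        · exact (not_w_triangle n G hbc hca.symm hab.symm).elim
        · -- c = edge vertex, a b original
          have hia : ia ∈ ec.1 := (adj_inl_edge n G).mp hca.symm
          have hib : ib ∈ ec.1 := (adj_inl_edge n G).mp hbc
          have hab' := (adj_inl_inl n G).mp hab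
          have he : ec.1 = s(ia, ib) := sym2_eq_of_mem hia hib hab'.ne
          refine Or.inr ⟨ec, ia, ib, hab', he, ?_⟩
          have e1 : s((Sum.inr (Sum.inr ec) : Vc n G), Sum.inl ia)
              = s(Sum.inl ia, Sum.inr (Sum.inr ec)) := Sym2.eq_swap
          rw [e1, finset_swap23]
      · exact (not_w_triangle n G hab hbc.symm hca.symm).elim
      · rcases c with ic | pc | ec
        · -- b = edge vertex
          have hia : ia ∈ eb.1 := (adj_inl_edge n G).mp hab
          have hic : ic ∈ eb.1 := (adj_inl_edge n G).mp hbc.symm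
          have hca' := (adj_inl_inl n G).mp hca
          have he : eb.1 = s(ic, ia) := sym2_eq_of_mem hic hia hca'.ne
          refine Or.inr ⟨eb, ic, ia, hca', he, ?_⟩
          have e1 : s((Sum.inr (Sum.inr eb) : Vc n G), Sum.inl ic)
              = s(Sum.inl ic, Sum.inr (Sum.inr eb)) := Sym2.eq_swap
          rw [e1, finset_rev, finset_swap23]
        · exact (not_w_triangle n G hbc hca.symm hab.symm).elim
        · exact (not_adj_inr_edge n G hbc).elim
    · exact (not_w_triangle n G hca hab.symm hbc.symm).elim
    · rcases b with ib | pb | eb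
      · rcases c with ic | pc | ec
        · -- a = edge vertex
          have hib : ib ∈ ea.1 := (adj_inl_edge n G).mp hab.symm
          have hic : ic ∈ ea.1 := (adj_inl_edge n G).mp hca
          have hbc' := (adj_inl_inl n G).mp hbc
          have he : ea.1 = s(ib, ic) := sym2_eq_of_mem hib hic hbc'.ne
          refine Or.inr ⟨ea, ib, ic, hbc', he, ?_⟩
          have e1 : s((Sum.inr (Sum.inr ea) : Vc n G), Sum.inl ib)
              = s(Sum.inl ib, Sum.inr (Sum.inr ea)) := Sym2.eq_swap
          have e2 : s((Sum.inl ic : Vc n G), Sum.inr (Sum.inr ea))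
              = s((Sum.inr (Sum.inr ea) : Vc n G), Sum.inl ic) := Sym2.eq_swap
          rw [e1, finset_swap12]
        · exact (not_w_triangle n G hbc hca.symm hab.symm).elim
        · exact (not_adj_inr_edge n G hca).elim
      · exact (not_w_triangle n G hab hbc.symm hca.symm).elim
      · exact (not_adj_inr_edge n G hab.symm).elim
  · rintro (⟨i, j, k, h1, h2, h3, rfl⟩ | ⟨e, i, j, hij, he, rfl⟩)
    · exact ⟨Sum.inl i, Sum.inl j, Sum.inl k, (adj_inl_inl n G).mpr h1,
        (adj_inl_inl n G).mpr h2, (adj_inl_inl n G).mpr h3, rfl⟩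
    · have hi : i ∈ e.1 := by rw [he]; exact Sym2.mem_mk_left i j
      have hj : j ∈ e.1 := by rw [he]; exact Sym2.mem_mk_right i j
      refine ⟨Sum.inl i, Sum.inl j, Sum.inr (Sum.inr e), (adj_inl_inl n G).mpr hij,
        (adj_inl_edge n G).mpr hj, ((adj_inl_edge n G).mpr hi).symm, ?_⟩
      have e1 : s((Sum.inr (Sum.inr e) : Vc n G), Sum.inl i)
          = s(Sum.inl i, Sum.inr (Sum.inr e)) := Sym2.eq_swap
      rw [e1, finset_swap23]

end Count

section Count2

variable {E' : Set (Sym2 (Fin n))}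

lemma sym2_exists_rep {α : Type*} (z : Sym2 α) : ∃ i j, z = s(i, j) := by
  induction z using Sym2.ind with
  | _ i j => exact ⟨i, j, rfl⟩

lemma disjoint_E2_orig : Disjoint (E2 n G) (originalEdges n G \ Sym2.map Sum.inl '' E') := by
  rw [Set.disjoint_left]
  rintro p ⟨-, hp2⟩ ⟨hp3, -⟩
  exact hp2 hp3

lemma edgeSet_H (hE' : E' ⊆ G.edgeSet) :
    (Hgr n G E').edgeSet = E2 n G ∪ (originalEdges n G \ Sym2.map Sum.inl '' E') := by
  rw [Hgr, SimpleGraph.edgeSet_deleteEdges, G1, SimpleGraph.edgeSet_fromEdgeSet]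
  ext p
  constructor
  · rintro ⟨⟨hp1, hpd⟩, hp3⟩
    by_cases h : p ∈ originalEdges n G
    · exact Or.inr ⟨h, hp3⟩
    · exact Or.inl ⟨hp1, h⟩
  · rintro (⟨hp1, hp2⟩ | ⟨hp1, hp2⟩)
    · refine ⟨⟨hp1, E1_not_diag n G hp1⟩, fun hmem => hp2 ?_⟩
      exact Set.image_mono hE' hmem
    · have hpe1 : p ∈ E1 n G := orig_subset_E1 n G hp1
      exact ⟨⟨hpe1, E1_not_diag n G hpe1⟩, hp2⟩

lemma ncard_edgeSet_H (hE' : E' ⊆ G.edgeSet) :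
    (Hgr n G E').edgeSet.ncard = (E2 n G).ncard + (G.edgeSet \ E').ncard := by
  rw [edgeSet_H n G hE', Set.ncard_union_eq (disjoint_E2_orig n G) (Set.toFinite _)
    (Set.toFinite _)]
  congr 1
  have himg : originalEdges n G \ Sym2.map Sum.inl '' E'
      = Sym2.map Sum.inl '' (G.edgeSet \ E') := by
    rw [originalEdges, ← Set.image_diff (Sym2.map.injective Sum.inl_injective)]
  rw [himg, Set.ncard_image_of_injective _ (Sym2.map.injective Sum.inl_injective)]

/-- The edge-set of the triangle through the edge-vertex `v_e`. -/
def gB (e : EdgeIdx n G) : Finset (Sym2 (Vc n G)) :=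
  Sym2.lift ⟨fun i j => {s(Sum.inl i, Sum.inl j), s(Sum.inl i, Sum.inr (Sum.inr e)),
      s(Sum.inl j, Sum.inr (Sum.inr e))}, by
    intro i j
    dsimp only
    have h : s((Sum.inl j : Vc n G), Sum.inl i) = s(Sum.inl i, Sum.inl j) := Sym2.eq_swap
    rw [h, finset_swap23]⟩ e.1

lemma gB_eq (e : EdgeIdx n G) (i j : Fin n) (h : e.1 = s(i, j)) :
    gB n G e = {s(Sum.inl i, Sum.inl j), s(Sum.inl i, Sum.inr (Sum.inr e)),
      s(Sum.inl j, Sum.inr (Sum.inr e))} := by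
  simp only [gB, h, Sym2.lift_mk]

lemma gB_injective : Function.Injective (gB n G) := by
  intro e1 e2 heq
  obtain ⟨i, j, hij⟩ := sym2_exists_rep e1.1
  obtain ⟨k, l, hkl⟩ := sym2_exists_rep e2.1
  rw [gB_eq n G e1 i j hij, gB_eq n G e2 k l hkl] at heq
  have hmem : s((Sum.inl i : Vc n G), Sum.inr (Sum.inr e1)) ∈
      ({s((Sum.inl k : Vc n G), Sum.inl l), s(Sum.inl k, Sum.inr (Sum.inr e2)),
        s(Sum.inl l, Sum.inr (Sum.inr e2))} : Finset (Sym2 (Vc n G))) := by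
    rw [← heq]; simp
  simp [Sym2.eq_iff] at hmem
  tauto

lemma SB_eq_image :
    SB n G E' = gB n G '' {e : EdgeIdx n G | e.1 ∉ E'} := by
  ext s
  constructor
  · rintro ⟨e, i, j, hij, he, rfl⟩
    rw [SimpleGraph.deleteEdges_adj] at hij
    exact ⟨e, by rw [Set.mem_setOf_eq, he]; exact hij.2, gB_eq n G e i j he⟩
  · rintro ⟨e, hmem, rfl⟩
    obtain ⟨i, j, hij⟩ := sym2_exists_rep e.1
    have hadj : (G.deleteEdges E').Adj i j := by
      rw [SimpleGraph.deleteEdges_adj]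
      constructor
      · rw [← SimpleGraph.mem_edgeSet, ← hij]
        exact (SimpleGraph.mem_edgeFinset).mp e.2
      · rw [← hij]; exact hmem
    exact ⟨e, i, j, hadj, hij, gB_eq n G e i j hij⟩

lemma SB_ncard : (SB n G E').ncard = (G.edgeSet \ E').ncard := by
  rw [SB_eq_image, Set.ncard_image_of_injective _ (gB_injective n G)]
  have : Subtype.val '' {e : EdgeIdx n G | e.1 ∉ E'} = G.edgeSet \ E' := by
    ext x
    constructor
    · rintro ⟨e, he, rfl⟩
      exact ⟨(SimpleGraph.mem_edgeFinset).mp e.2, he⟩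
    · rintro ⟨hx1, hx2⟩
      exact ⟨⟨x, (SimpleGraph.mem_edgeFinset).mpr hx1⟩, hx2, rfl⟩
  rw [← this, Set.ncard_image_of_injective _ Subtype.val_injective]

lemma SA_SB_disjoint : Disjoint (SA n G E') (SB n G E') := by
  rw [Set.disjoint_left]
  rintro s ⟨i, j, k, -, -, -, rfl⟩ ⟨e, a, b, -, -, heq⟩
  have : s((Sum.inl a : Vc n G), Sum.inr (Sum.inr e)) ∈
      ({s((Sum.inl i : Vc n G), Sum.inl j), s(Sum.inl j, Sum.inl k),
        s(Sum.inl k, Sum.inl i)} : Finset (Sym2 (Vc n G))) := by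
    rw [heq]; simp
  simp [Sym2.eq_iff] at this

lemma cycles_H_ncard :
    ((Hgr n G E').cyclesUpTo 3).ncard = (SA n G E').ncard + (G.edgeSet \ E').ncard := by
  rw [cycles_H_eq, Set.ncard_union_eq (SA_SB_disjoint n G) (Set.toFinite _) (Set.toFinite _),
    SB_ncard]

lemma SA_empty_iff : SA n G E' = ∅ ↔ (G.deleteEdges E').CliqueFree 3 := by
  rw [cliqueFree_three_iff, Set.eq_empty_iff_forall_notMem]
  constructor
  · intro h a b c hab hbc hca
    exact h _ ⟨a, b, c, hab, hbc, hca, rfl⟩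
  · rintro h s ⟨i, j, k, h1, h2, h3, rfl⟩
    exact h i j k h1 h2 h3

lemma noadj_full : ∀ i j : Fin n, ¬ (G.deleteEdges G.edgeSet).Adj i j := by
  intro i j h
  rw [SimpleGraph.deleteEdges_adj] at h
  exact h.2 ((G.mem_edgeSet).mpr h.1)

lemma G2_eq_H : G2 n G = Hgr n G G.edgeSet := by
  rw [G2_eq]; rfl

lemma geomCurv_G2 :
    (G2 n G).geomCurv 3 = (Fintype.card (Vc n G) : ℤ) - ((E2 n G).ncard : ℤ) := by
  rw [G2_eq_H, SimpleGraph.geomCurv]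
  have h1 : (G.edgeSet \ G.edgeSet).ncard = 0 := by simp
  have hSA : SA n G G.edgeSet = ∅ := by
    rw [Set.eq_empty_iff_forall_notMem]
    rintro s ⟨i, j, k, h, -⟩
    exact noadj_full n G i j h
  rw [ncard_edgeSet_H n G Set.Subset.rfl, cycles_H_ncard, hSA, h1]
  simp

lemma curv_eq_iff (hE' : E' ⊆ G.edgeSet) :
    (Hgr n G E').geomCurv 3 = (G2 n G).geomCurv 3 ↔ (G.deleteEdges E').CliqueFree 3 := by
  rw [SimpleGraph.geomCurv, geomCurv_G2, ncard_edgeSet_H n G hE', cycles_H_ncard,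
    ← SA_empty_iff, ← Set.ncard_eq_zero (Set.toFinite (SA n G E'))]
  constructor
  · intro h; push_cast at h; omega
  · intro h; rw [h]; push_cast; ring

end Count2

lemma optTADP_aux (m : ℕ∞) :
    (∃ E' ⊆ G.edgeSet, (E'.ncard : ℕ∞) = m ∧ (G.deleteEdges E').CliqueFree 3) ↔
    (∃ E₃ ⊆ E1 n G \ E2 n G, (E₃.ncard : ℕ∞) = m ∧
      ((G1 n G).deleteEdges E₃).geomCurv 3 = (G2 n G).geomCurv 3) := by
  constructor
  · rintro ⟨E', hsub, hcard, hfree⟩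
    refine ⟨Sym2.map Sum.inl '' E', ?_, ?_, ?_⟩
    · rw [E1_diff_E2, originalEdges]
      exact Set.image_mono hsub
    · rw [Set.ncard_image_of_injective _ (Sym2.map.injective Sum.inl_injective)]
      exact hcard
    · exact (curv_eq_iff n G hsub).mpr hfree
  · rintro ⟨E₃, hsub, hcard, hcurv⟩
    rw [E1_diff_E2, originalEdges] at hsub
    have hinj : Function.Injective (Sym2.map (Sum.inl : Fin n → Vc n G)) :=
      Sym2.map.injective Sum.inl_injective
    set E' := Sym2.map (Sum.inl : Fin n → Vc n G) ⁻¹' E₃ ∩ G.edgeSet with hE'def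
    have hsub' : E' ⊆ G.edgeSet := Set.inter_subset_right
    have himg : Sym2.map (Sum.inl : Fin n → Vc n G) '' E' = E₃ := by
      rw [hE'def, Set.image_inter hinj, Set.image_preimage_eq_inter_range]
      have hrange : E₃ ⊆ Set.range (Sym2.map (Sum.inl : Fin n → Vc n G)) :=
        hsub.trans (Set.image_subset_range _ _)
      ext p
      constructor
      · rintro ⟨⟨h1, -⟩, -⟩; exact h1
      · intro hp; exact ⟨⟨hp, hrange hp⟩, hsub hp⟩
    refine ⟨E', hsub', ?_, ?_⟩
    · rw [← hcard, ← himg, Set.ncard_image_of_injective _ hinj]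
    · refine (curv_eq_iff n G hsub').mp ?_
      show ((G1 n G).deleteEdges (Sym2.map Sum.inl '' E')).geomCurv 3 = (G2 n G).geomCurv 3
      rw [himg]
      exact hcurv

/-- `OPT_TDP(G) = OPT_TADP_{C²₃}(G₁, G₂)` for the constructed pair
`(G₁, G₂)`. -/
theorem optTDP_eq_optTADP (hn : 2 ≤ n) : optTDP n G = optTADP n G := by
  unfold optTDP optTADP
  congr 1
  ext m
  simpa only [Set.mem_setOf_eq] using optTADP_aux n G m

end Stmt11
end

section
/- Let n be a positive even integer, let G be a cubic graph on vertices v₁, …, v_n with designated vertices v₁ and v_n, and let G'' = (V'', E'') be as in the construction described in the context. If G contains no Hamiltonian path between v₁ and v_n, then for every edge set E_d ⊆ E (edges of G regarded as edges of G'') one has C_Gromov(G'' ∖ E_d) ≤ n/2. -/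
namespace GromovConstruction

/-- The edges of a path from `x` to `y` through `t` internal vertices `f 0, …, f (t−1)`
(a direct edge `{x,y}` when `t = 0`). -/
def pathEdges {W : Type*} (x y : W) (t : ℕ) (f : ℕ → W) : Set (Sym2 W) :=
  if t = 0 then {s(x, y)}
  else {s(x, f 0), s(f (t - 1), y)} ∪ {p | ∃ l, l + 1 < t ∧ p = s(f l, f (l + 1))}

variable (n : ℕ) (G : SimpleGraph (Fin n))

/-- The embedding of the vertices `v₁, …, v_n` of `G` into the vertex set
`{v₀, v₁, …, v_{n+2}}` of `G'` (vertex `v_j` is index `j`). -/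
def emb (i : Fin n) : Fin (n + 3) := ⟨i.1 + 1, by have := i.isLt; omega⟩

/-- The edge set `E'` of `G'`: the edges of `G` plus the edges
`{v₀,v₁}, {v_n,v_{n+1}}, {v_{n+1},v_{n+2}}`. -/
def E' : Set (Sym2 (Fin (n + 3))) :=
  Sym2.map (emb n) '' G.edgeSet ∪
  {s((⟨0, by omega⟩ : Fin (n + 3)), (⟨1, by omega⟩ : Fin (n + 3))),
   s((⟨n, by omega⟩ : Fin (n + 3)), (⟨n + 1, by omega⟩ : Fin (n + 3))),
   s((⟨n + 1, by omega⟩ : Fin (n + 3)), (⟨n + 2, by omega⟩ : Fin (n + 3)))}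

/-- The vertex set `V''` of `G''`: the vertices `v₀, …, v_{n+2}` of `G'`, plus `n/2`
internal path vertices for each `j ∈ {0, …, n+2}`, plus the vertex `u` (the `Unit`). -/
abbrev Vpp := Fin (n + 3) ⊕ ((Fin (n + 3) × Fin (n / 2)) ⊕ Unit)

/-- The vertex `u` of `G''`. -/
def uV : Vpp n := Sum.inr (Sum.inr ())

/-- The edges of the internally disjoint path of length `n/2 + 1` from `u` to `v_j`
through the `n/2` internal vertices `(j, 0), …, (j, n/2 − 1)`. -/
def uPath (j : Fin (n + 3)) : Set (Sym2 (Vpp n)) :=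
  pathEdges (uV n) (Sum.inl j) (n / 2)
    (fun l => if h : l < n / 2 then Sum.inr (Sum.inl (j, ⟨l, h⟩)) else uV n)

/-- The edge set `E''` of `G''`. -/
def Epp : Set (Sym2 (Vpp n)) :=
  Sym2.map Sum.inl '' E' n G ∪ ⋃ j : Fin (n + 3), uPath n j

/-- The graph `G''`. -/
def Gpp : SimpleGraph (Vpp n) := SimpleGraph.fromEdgeSet (Epp n G)

/-- The edges of `G` viewed as edges of `G''`. -/
def embeddedGEdges : Set (Sym2 (Vpp n)) :=
  Sym2.map (Sum.inl ∘ emb n) '' G.edgeSet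

/-- `N = |V''| = (n² + 5n)/2 + 4`. -/
def bigN : ℕ := (n ^ 2 + 5 * n) / 2 + 4

/-- The vertex set `V'''` of `G₁` and `G₂`: `V''` together with the `N` new vertices
`w₀, …, w_{N−1}`. -/
abbrev Vbig := Vpp n ⊕ Fin (bigN n)

/-- The edge set `E₁` of `G₁`: `E''`, a complete graph on `w₀, …, w_{N−1}`, and the
edge `{u, w₀}`. -/
def E1 : Set (Sym2 (Vbig n)) :=
  Sym2.map Sum.inl '' Epp n G ∪
  {p | ∃ a b : Fin (bigN n), a ≠ b ∧ p = s(Sum.inr a, Sum.inr b)} ∪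
  {s(Sum.inl (uV n), Sum.inr (⟨0, by unfold bigN; omega⟩ : Fin (bigN n)))}

/-- The graph `G₁ = (V''', E₁)`. -/
def G1 : SimpleGraph (Vbig n) := SimpleGraph.fromEdgeSet (E1 n G)

/-- The edge set `Ê = (E'' ∖ E) ∪ { {v_j, v_{j+1}} : 0 ≤ j ≤ n+1 }` on `V''`. -/
def Ehat : Set (Sym2 (Vpp n)) :=
  (Epp n G \ embeddedGEdges n G) ∪
  {p | ∃ j : Fin (n + 2),
    p = s(Sum.inl (⟨j.1, by have := j.isLt; omega⟩ : Fin (n + 3)),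
          Sum.inl (⟨j.1 + 1, by have := j.isLt; omega⟩ : Fin (n + 3)))}

/-- The edge set `A` on `w₀, …, w_{N−1}`: the image of `Ê` under the isomorphism
`φ : V'' ≃ Fin N` (which maps `u` to `w₀`). -/
def A (φ : Vpp n ≃ Fin (bigN n)) : Set (Sym2 (Fin (bigN n))) :=
  Sym2.map ⇑φ '' Ehat n G

/-- The graph `H = ({w₀, …, w_{N−1}}, A)`. -/
def Hgraph (φ : Vpp n ≃ Fin (bigN n)) : SimpleGraph (Fin (bigN n)) :=
  SimpleGraph.fromEdgeSet (A n G φ)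

/-- The edge set `E₂ = E'' ∪ A ∪ { {u, w₀} }` of `G₂`. -/
def E2 (φ : Vpp n ≃ Fin (bigN n)) : Set (Sym2 (Vbig n)) :=
  Sym2.map Sum.inl '' Epp n G ∪
  Sym2.map (Sum.inr ∘ ⇑φ) '' Ehat n G ∪
  {s(Sum.inl (uV n), Sum.inr (⟨0, by unfold bigN; omega⟩ : Fin (bigN n)))}

/-- The graph `G₂ = (V''', E₂)`. -/
def G2 (φ : Vpp n ≃ Fin (bigN n)) : SimpleGraph (Vbig n) :=
  SimpleGraph.fromEdgeSet (E2 n G φ)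

end GromovConstruction

namespace GromovConstruction

section Statement16Aux





variable {n : ℕ} {G : SimpleGraph (Fin n)} {Ed : Set (Sym2 (Vpp n))}
variable (hEd : Ed ⊆ embeddedGEdges n G) (hm : 2 ≤ n / 2)

/-- internal path vertex -/
def iv (j : Fin (n + 3)) (t : Fin (n / 2)) : Vpp n := Sum.inr (Sum.inl (j, t))



include hEd in
lemma Ed_inl {e : Sym2 (Vpp n)} (he : e ∈ Ed) :
    ∃ a b : Fin n, e = s(Sum.inl (emb n a), Sum.inl (emb n b)) := by
  obtain ⟨e', -, rfl⟩ := hEd he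
  induction e' using Sym2.inductionOn with
  | hf a b => exact ⟨a, b, rfl⟩

include hEd in
lemma not_mem_Ed_inr {x : Vpp n} {z : (Fin (n + 3) × Fin (n / 2)) ⊕ Unit} :
    s(x, Sum.inr z) ∉ Ed := by
  intro h
  obtain ⟨a, b, hab⟩ := Ed_inl hEd h
  rw [Sym2.eq_iff] at hab
  rcases hab with ⟨-, h⟩ | ⟨-, h⟩ <;> exact Sum.inr_ne_inl h

include hm in
lemma uPath_fst (j : Fin (n + 3)) :
    s(uV n, iv j ⟨0, by omega⟩) ∈ uPath n j := by
  unfold uPath pathEdges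
  rw [if_neg (by omega)]
  left
  left
  dsimp only
  rw [dif_pos (by omega : (0:ℕ) < n / 2)]
  rfl

include hm in
lemma uPath_lst (j : Fin (n + 3)) :
    s(iv j ⟨n / 2 - 1, by omega⟩, Sum.inl j) ∈ uPath n j := by
  unfold uPath pathEdges
  rw [if_neg (by omega)]
  left
  right
  dsimp only
  rw [dif_pos (by omega : n / 2 - 1 < n / 2)]
  rfl

lemma uPath_mid (j : Fin (n + 3)) (l : ℕ) (hl : l + 1 < n / 2) :
    s(iv j ⟨l, by omega⟩, iv j ⟨l + 1, hl⟩) ∈ uPath n j := by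
  unfold uPath pathEdges
  rw [if_neg (by omega)]
  right
  exact ⟨l, hl, by dsimp only; rw [dif_pos (by omega : l < n / 2), dif_pos hl]; rfl⟩

/-- the graph H = G'' minus Ed -/
abbrev HH (n : ℕ) (G : SimpleGraph (Fin n)) (Ed : Set (Sym2 (Vpp n))) :
    SimpleGraph (Vpp n) := (Gpp n G).deleteEdges Ed

include hEd in
lemma adj_of_uPath {x y : Vpp n} (j : Fin (n + 3)) (hxy : s(x, y) ∈ uPath n j)
    (hne : x ≠ y) (hin : ∃ z, x = Sum.inr z ∨ y = Sum.inr z) :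
    (HH n G Ed).Adj x y := by
  rw [SimpleGraph.deleteEdges_adj]
  constructor
  · rw [Gpp, SimpleGraph.fromEdgeSet_adj]
    exact ⟨Or.inr (Set.mem_iUnion.mpr ⟨j, hxy⟩), hne⟩
  · obtain ⟨z, hz | hz⟩ := hin
    · subst hz; rw [Sym2.eq_swap]; exact not_mem_Ed_inr hEd
    · subst hz; exact not_mem_Ed_inr hEd

include hEd hm in
lemma adj_u_iv (j : Fin (n + 3)) : (HH n G Ed).Adj (uV n) (iv j ⟨0, by omega⟩) :=
  adj_of_uPath hEd j (uPath_fst hm j) (by simp [uV, iv]) ⟨_, Or.inl rfl⟩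

include hEd hm in
lemma adj_iv_inl (j : Fin (n + 3)) :
    (HH n G Ed).Adj (iv j ⟨n / 2 - 1, by omega⟩) (Sum.inl j) :=
  adj_of_uPath hEd j (uPath_lst hm j) (by simp [iv]) ⟨_, Or.inl rfl⟩

include hEd in
lemma adj_iv_iv (j : Fin (n + 3)) (l : ℕ) (hl : l + 1 < n / 2) :
    (HH n G Ed).Adj (iv j ⟨l, by omega⟩) (iv j ⟨l + 1, hl⟩) :=
  adj_of_uPath hEd j (uPath_mid j l hl)
    (by simp only [iv, ne_eq, Sum.inr.injEq, Sum.inl.injEq, Prod.mk.injEq]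
        rintro ⟨-, h⟩; exact absurd (congrArg Fin.val h) (by simp)) ⟨_, Or.inl rfl⟩




open SimpleGraph Walk

include hEd hm in
lemma exists_walk_u_iv (j : Fin (n + 3)) (t : ℕ) (ht : t < n / 2) :
    ∃ w : (HH n G Ed).Walk (uV n) (iv j ⟨t, ht⟩), w.length = t + 1 := by
  induction t with
  | zero => exact ⟨Walk.cons (adj_u_iv hEd hm j) Walk.nil, rfl⟩
  | succ t ih =>
    obtain ⟨w, hw⟩ := ih (by omega)
    exact ⟨w.concat (adj_iv_iv hEd j t ht), by rw [Walk.length_concat, hw]⟩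

include hEd hm in
lemma dist_u_iv (j : Fin (n + 3)) (t : Fin (n / 2)) :
    (HH n G Ed).dist (uV n) (iv j t) ≤ t.1 + 1 := by
  obtain ⟨w, hw⟩ := exists_walk_u_iv hEd hm j t.1 t.2
  calc (HH n G Ed).dist (uV n) (iv j t) ≤ w.length := SimpleGraph.dist_le w
  _ = t.1 + 1 := hw

include hEd hm in
lemma exists_walk_u_inl (j : Fin (n + 3)) :
    ∃ w : (HH n G Ed).Walk (uV n) (Sum.inl j), w.length = n / 2 + 1 := by
  obtain ⟨w, hw⟩ := exists_walk_u_iv hEd hm j (n / 2 - 1) (by omega)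
  exact ⟨w.concat (adj_iv_inl hEd hm j), by rw [Walk.length_concat, hw]; omega⟩

include hEd hm in
lemma dist_u_inl (j : Fin (n + 3)) :
    (HH n G Ed).dist (uV n) (Sum.inl j) ≤ n / 2 + 1 := by
  obtain ⟨w, hw⟩ := exists_walk_u_inl hEd hm j
  calc (HH n G Ed).dist (uV n) (Sum.inl j) ≤ w.length := SimpleGraph.dist_le w
  _ = n / 2 + 1 := hw

include hEd hm in
lemma dist_u_all (x : Vpp n) : (HH n G Ed).dist (uV n) x ≤ n / 2 + 1 := by
  match x with
  | Sum.inl j => exact dist_u_inl hEd hm j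
  | Sum.inr (Sum.inl (j, t)) =>
      exact le_trans (dist_u_iv hEd hm j t) (by have := t.2; omega)
  | Sum.inr (Sum.inr ()) => exact (SimpleGraph.dist_self (G := HH n G Ed) (v := uV n)).le.trans (Nat.zero_le _)

include hEd hm in
lemma dist_u_inr (z : (Fin (n + 3) × Fin (n / 2)) ⊕ Unit) :
    (HH n G Ed).dist (uV n) (Sum.inr z) ≤ n / 2 := by
  match z with
  | Sum.inl (j, t) => exact le_trans (dist_u_iv hEd hm j t) (by have := t.2; omega)
  | Sum.inr () => exact (SimpleGraph.dist_self (G := HH n G Ed) (v := uV n)).le.trans (Nat.zero_le _)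

include hEd hm in
lemma reach_u (x : Vpp n) : (HH n G Ed).Reachable (uV n) x := by
  match x with
  | Sum.inl j => exact ⟨(exists_walk_u_inl hEd hm j).choose⟩
  | Sum.inr (Sum.inl (j, t)) => exact ⟨(exists_walk_u_iv hEd hm j t.1 t.2).choose⟩
  | Sum.inr (Sum.inr ()) => exact SimpleGraph.Reachable.refl _

include hEd hm in
lemma HH_conn : (HH n G Ed).Connected := by
  rw [SimpleGraph.connected_iff]
  refine ⟨fun x y => ((reach_u hEd hm x).symm).trans (reach_u hEd hm y), ⟨uV n⟩⟩

include hEd hm in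
lemma dist_le_diam (hmn : n / 2 + n / 2 = n) (x y : Vpp n) :
    (HH n G Ed).dist x y ≤ n + 2 := by
  have h := (HH_conn hEd hm).dist_triangle (u := x) (v := uV n) (w := y)
  have h1 : (HH n G Ed).dist x (uV n) ≤ n / 2 + 1 := by
    rw [SimpleGraph.dist_comm]; exact dist_u_all hEd hm x
  have h2 := dist_u_all hEd hm y
  omega



include hm in
lemma adj_cases {x y : Vpp n} (h : (HH n G Ed).Adj x y) :
    (∃ a b : Fin (n + 3), x = Sum.inl a ∧ y = Sum.inl b) ∨
    (∃ (j : Fin (n + 3)) (t : Fin (n / 2)), t.1 = 0 ∧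
      ((x = uV n ∧ y = iv j t) ∨ (y = uV n ∧ x = iv j t))) ∨
    (∃ (j : Fin (n + 3)) (t t' : Fin (n / 2)), t'.1 = t.1 + 1 ∧
      ((x = iv j t ∧ y = iv j t') ∨ (y = iv j t ∧ x = iv j t'))) ∨
    (∃ (j : Fin (n + 3)) (t : Fin (n / 2)), t.1 = n / 2 - 1 ∧
      ((x = iv j t ∧ y = Sum.inl j) ∨ (y = iv j t ∧ x = Sum.inl j))) := by
  rw [SimpleGraph.deleteEdges_adj] at h
  obtain ⟨h, -⟩ := h
  rw [Gpp, SimpleGraph.fromEdgeSet_adj] at h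
  obtain ⟨h, -⟩ := h
  rcases h with h | h
  · left
    obtain ⟨e, -, he⟩ := h
    induction e using Sym2.inductionOn with
    | hf a b =>
      rw [Sym2.map_pair_eq, Sym2.eq_iff] at he
      rcases he with ⟨h1, h2⟩ | ⟨h1, h2⟩
      exacts [⟨a, b, h1.symm, h2.symm⟩, ⟨b, a, h2.symm, h1.symm⟩]
  · rw [Set.mem_iUnion] at h
    obtain ⟨j, hj⟩ := h
    unfold uPath pathEdges at hj
    rw [if_neg (by omega)] at hj
    rcases hj with (hj | hj) | hj
    · -- s(x,y) = s(uV, f 0)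
      right; left
      dsimp only at hj
      rw [dif_pos (by omega : (0:ℕ) < n / 2), Sym2.eq_iff] at hj
      refine ⟨j, ⟨0, by omega⟩, rfl, ?_⟩
      rcases hj with ⟨h1, h2⟩ | ⟨h1, h2⟩
      exacts [Or.inl ⟨h1, h2⟩, Or.inr ⟨h2, h1⟩]
    · -- s(x,y) = s(f (n/2-1), inl j)
      right; right; right
      rw [Set.mem_singleton_iff] at hj
      dsimp only at hj
      rw [dif_pos (by omega : n / 2 - 1 < n / 2)] at hj
      rw [Sym2.eq_iff] at hj
      refine ⟨j, ⟨n / 2 - 1, by omega⟩, rfl, ?_⟩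
      rcases hj with ⟨h1, h2⟩ | ⟨h1, h2⟩
      exacts [Or.inl ⟨h1, h2⟩, Or.inr ⟨h2, h1⟩]
    · -- middle
      right; right; left
      obtain ⟨l, hl, hj⟩ := hj
      dsimp only at hj
      rw [dif_pos (by omega : l < n / 2), dif_pos hl, Sym2.eq_iff] at hj
      refine ⟨j, ⟨l, by omega⟩, ⟨l + 1, hl⟩, rfl, ?_⟩
      rcases hj with ⟨h1, h2⟩ | ⟨h1, h2⟩
      exacts [Or.inl ⟨h1, h2⟩, Or.inr ⟨h2, h1⟩]

/-- The A-subgraph on the `v_j` indices. -/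
def GA (n : ℕ) (G : SimpleGraph (Fin n)) (Ed : Set (Sym2 (Vpp n))) :
    SimpleGraph (Fin (n + 3)) where
  Adj a b := (HH n G Ed).Adj (Sum.inl a) (Sum.inl b)
  symm := ⟨fun a b h => h.symm⟩
  loopless := ⟨fun a h => (HH n G Ed).loopless.irrefl _ h⟩

def GAhom : GA n G Ed →g HH n G Ed := ⟨Sum.inl, id⟩

lemma GA_adj_mem_E' {a b : Fin (n + 3)} (h : (GA n G Ed).Adj a b) :
    s(a, b) ∈ E' n G := by
  have h' : (HH n G Ed).Adj (Sum.inl a) (Sum.inl b) := h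
  rw [SimpleGraph.deleteEdges_adj] at h'
  obtain ⟨h', -⟩ := h'
  rw [Gpp, SimpleGraph.fromEdgeSet_adj] at h'
  obtain ⟨h', -⟩ := h'
  rcases h' with h' | h'
  · obtain ⟨e, he, heq⟩ := h'
    induction e using Sym2.inductionOn with
    | hf c d =>
      rw [Sym2.map_pair_eq, Sym2.eq_iff] at heq
      rcases heq with ⟨h1, h2⟩ | ⟨h1, h2⟩
      · obtain rfl := Sum.inl_injective h1.symm
        obtain rfl := Sum.inl_injective h2.symm
        exact he
      · obtain rfl := Sum.inl_injective h1.symm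
        obtain rfl := Sum.inl_injective h2.symm
        exact Sym2.eq_swap ▸ he
  · exfalso
    rw [Set.mem_iUnion] at h'
    obtain ⟨j, hj⟩ := h'
    unfold uPath pathEdges at hj
    by_cases h0 : n / 2 = 0
    · rw [if_pos h0, Set.mem_singleton_iff, Sym2.eq_iff] at hj
      rcases hj with ⟨h1, -⟩ | ⟨-, h1⟩ <;> exact Sum.inl_ne_inr h1
    · rw [if_neg h0] at hj
      rcases hj with (hj | hj) | hj
      · rw [Sym2.eq_iff] at hj
        rcases hj with ⟨h1, -⟩ | ⟨-, h1⟩ <;> exact Sum.inl_ne_inr h1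
      · rw [Set.mem_singleton_iff] at hj
        dsimp only at hj
        rw [dif_pos (by omega : n / 2 - 1 < n / 2)] at hj
        rw [Sym2.eq_iff] at hj
        rcases hj with ⟨h1, -⟩ | ⟨-, h1⟩ <;> exact Sum.inl_ne_inr h1
      · obtain ⟨l, hl, hj⟩ := hj
        dsimp only at hj
        rw [dif_pos (by omega : l < n / 2), dif_pos hl, Sym2.eq_iff] at hj
        rcases hj with ⟨h1, -⟩ | ⟨-, h1⟩ <;> exact Sum.inl_ne_inr h1

/-- membership in E' : index-level case analysis -/
lemma E'_cases {a b : Fin (n + 3)} (h : s(a, b) ∈ E' n G) :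
    (∃ a' b' : Fin n, G.Adj a' b' ∧
      ((a = emb n a' ∧ b = emb n b') ∨ (a = emb n b' ∧ b = emb n a'))) ∨
    ((a.1 = 0 ∧ b.1 = 1) ∨ (a.1 = 1 ∧ b.1 = 0)) ∨
    ((a.1 = n ∧ b.1 = n + 1) ∨ (a.1 = n + 1 ∧ b.1 = n)) ∨
    ((a.1 = n + 1 ∧ b.1 = n + 2) ∨ (a.1 = n + 2 ∧ b.1 = n + 1)) := by
  rcases h with h | h
  · left
    obtain ⟨e, he, heq⟩ := h
    induction e using Sym2.inductionOn with
    | hf c d =>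
      rw [Sym2.map_pair_eq, Sym2.eq_iff] at heq
      rw [SimpleGraph.mem_edgeSet] at he
      rcases heq with ⟨h1, h2⟩ | ⟨h1, h2⟩
      exacts [⟨c, d, he, Or.inl ⟨h1.symm, h2.symm⟩⟩, ⟨c, d, he, Or.inr ⟨h2.symm, h1.symm⟩⟩]
  · right
    simp only [Set.mem_insert_iff, Set.mem_singleton_iff, Sym2.eq_iff, Fin.ext_iff] at h
    omega

open SimpleGraph in
open Classical in
noncomputable def capD (n : ℕ) (G : SimpleGraph (Fin n)) (Ed : Set (Sym2 (Vpp n)))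
    (i k : Fin (n + 3)) : ℕ :=
  if (GA n G Ed).Reachable i k then min ((GA n G Ed).dist i k) (n + 2) else n + 2

noncomputable def fpot (n : ℕ) (G : SimpleGraph (Fin n)) (Ed : Set (Sym2 (Vpp n)))
    (i : Fin (n + 3)) : Vpp n → ℕ
  | Sum.inl k => capD n G Ed i k
  | Sum.inr (Sum.inl (k, t)) => min (capD n G Ed i k + (n / 2 - t.1)) (n / 2 + 2 + t.1)
  | Sum.inr (Sum.inr _) => n / 2 + 1

lemma capD_le (i k : Fin (n + 3)) : capD n G Ed i k ≤ n + 2 := by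
  unfold capD; split_ifs <;> omega

lemma capD_self (i : Fin (n + 3)) : capD n G Ed i i = 0 := by
  unfold capD
  rw [if_pos (SimpleGraph.Reachable.refl i), SimpleGraph.dist_self]
  omega

lemma capD_lip {i a b : Fin (n + 3)} (h : (GA n G Ed).Adj a b) :
    capD n G Ed i b ≤ capD n G Ed i a + 1 := by
  unfold capD
  by_cases hr : (GA n G Ed).Reachable i a
  · rw [if_pos hr, if_pos (hr.trans ⟨h.toWalk⟩)]
    obtain ⟨w, hw⟩ := hr.exists_walk_length_eq_dist
    have h2 : (GA n G Ed).dist i b ≤ (GA n G Ed).dist i a + 1 := by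
      have := SimpleGraph.dist_le (w.concat h)
      rwa [SimpleGraph.Walk.length_concat, hw] at this
    omega
  · rw [if_neg hr, if_neg (fun hr' => hr (hr'.trans ⟨h.symm.toWalk⟩))]
    omega

lemma capD_reach {i k : Fin (n + 3)} (h : capD n G Ed i k ≤ n + 1) :
    (GA n G Ed).Reachable i k ∧ (GA n G Ed).dist i k ≤ capD n G Ed i k := by
  unfold capD at *
  split_ifs at * with hr
  · exact ⟨hr, by omega⟩
  · omega

include hm in
lemma fpot_lip (hmn : n / 2 + n / 2 = n) (i : Fin (n + 3)) {x y : Vpp n}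
    (h : (HH n G Ed).Adj x y) :
    fpot n G Ed i y ≤ fpot n G Ed i x + 1 := by
  rcases adj_cases hm h with ⟨a, b, rfl, rfl⟩ | ⟨j, t, ht, hc⟩ | ⟨j, t, t', ht, hc⟩ |
    ⟨j, t, ht, hc⟩
  · exact capD_lip (i := i) h
  · have hb := capD_le (Ed := Ed) (G := G) i j
    rcases hc with ⟨rfl, rfl⟩ | ⟨rfl, rfl⟩ <;> simp only [fpot, iv, uV] <;> omega
  · rcases hc with ⟨rfl, rfl⟩ | ⟨rfl, rfl⟩ <;> simp only [fpot, iv] <;>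
      (have h2 := t'.2; omega)
  · have hb := capD_le (Ed := Ed) (G := G) i j
    rcases hc with ⟨rfl, rfl⟩ | ⟨rfl, rfl⟩ <;> simp only [fpot, iv] <;>
      (have h2 := t.2; omega)

include hm in
lemma fpot_le_walk (hmn : n / 2 + n / 2 = n) (i : Fin (n + 3)) {x y : Vpp n}
    (w : (HH n G Ed).Walk x y) :
    fpot n G Ed i y ≤ fpot n G Ed i x + w.length := by
  induction w with
  | nil => simp
  | cons h p ih =>
    have := fpot_lip hm hmn i h
    rw [SimpleGraph.Walk.length_cons]
    omega

include hEd hm in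
lemma fpot_le_dist (hmn : n / 2 + n / 2 = n) (i : Fin (n + 3)) (y : Vpp n) :
    fpot n G Ed i y ≤ (HH n G Ed).dist (Sum.inl i) y := by
  have hr : (HH n G Ed).Reachable (Sum.inl i) y :=
    ((reach_u hEd hm _).symm).trans (reach_u hEd hm y)
  obtain ⟨w, hw⟩ := hr.exists_walk_length_eq_dist
  have := fpot_le_walk hm hmn i w
  have h0 : fpot n G Ed i (Sum.inl i) = 0 := capD_self i
  omega

open SimpleGraph Walk

lemma emb_val (a : Fin n) : (emb n a).1 = a.1 + 1 := rfl

lemma nbr_z0 {a b : Fin (n + 3)} (h : (GA n G Ed).Adj a b) (ha : a.1 = 0) : b.1 = 1 := by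
  rcases E'_cases (GA_adj_mem_E' h) with ⟨a', b', -, ⟨h1, h2⟩ | ⟨h1, h2⟩⟩ | h | h | h
  · rw [h1, emb_val] at ha; omega
  · rw [h1, emb_val] at ha; omega
  all_goals omega

lemma nbr_zN {a b : Fin (n + 3)} (h : (GA n G Ed).Adj a b) (ha : a.1 = n + 2) :
    b.1 = n + 1 := by
  rcases E'_cases (GA_adj_mem_E' h) with ⟨a', b', -, ⟨h1, h2⟩ | ⟨h1, h2⟩⟩ | h | h | h
  · have := a'.2; rw [h1, emb_val] at ha; omega
  · have := b'.2; rw [h1, emb_val] at ha; omega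
  all_goals omega

lemma nbr_z1 {a b : Fin (n + 3)} (h : (GA n G Ed).Adj a b) (ha : a.1 = n + 1) :
    b.1 = n ∨ b.1 = n + 2 := by
  rcases E'_cases (GA_adj_mem_E' h) with ⟨a', b', -, ⟨h1, h2⟩ | ⟨h1, h2⟩⟩ | h | h | h
  · have := a'.2; rw [h1, emb_val] at ha; omega
  · have := b'.2; rw [h1, emb_val] at ha; omega
  all_goals omega

lemma nbr_mid {a b : Fin (n + 3)} (h : (GA n G Ed).Adj a b)
    (ha : 1 ≤ a.1 ∧ a.1 ≤ n) (hb : 1 ≤ b.1 ∧ b.1 ≤ n) :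
    ∃ a' b' : Fin n, G.Adj a' b' ∧ a = emb n a' ∧ b = emb n b' := by
  rcases E'_cases (GA_adj_mem_E' h) with ⟨a', b', he, ⟨h1, h2⟩ | ⟨h1, h2⟩⟩ | h | h | h
  · exact ⟨a', b', he, h1, h2⟩
  · exact ⟨b', a', he.symm, h1, h2⟩
  all_goals omega

/-- a vertex of a path whose neighbors all have the same (fixed) index must be an
endpoint -/
lemma endpoint_of_unique_nbr {i j z : Fin (n + 3)} {P : (GA n G Ed).Walk i j}
    (hP : P.IsPath) (hz : z ∈ P.support) (Vl : ℕ)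
    (hnbr : ∀ b, (GA n G Ed).Adj z b → b.1 = Vl) : z = i ∨ z = j := by
  by_contra hcon
  push_neg at hcon
  obtain ⟨hzi, hzj⟩ := hcon
  obtain ⟨q, r, rfl⟩ := Walk.mem_support_iff_exists_append.mp hz
  obtain ⟨x, hx, q', hq'⟩ := Walk.exists_eq_cons_of_ne hzi q.reverse
  obtain ⟨y, hy, r', hr'⟩ := Walk.exists_eq_cons_of_ne hzj r
  -- x ∈ q.support, y ∈ r.support.tail
  have hxq : x ∈ q.support := by
    have : x ∈ q.reverse.support := by
      rw [hq', Walk.support_cons]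
      exact List.mem_cons_of_mem _ q'.start_mem_support
    rwa [Walk.support_reverse, List.mem_reverse] at this
  have hyr : y ∈ r.support.tail := by
    rw [hr', Walk.support_cons, List.tail_cons]
    exact r'.start_mem_support
  have hxy : x = y := by
    have h1 := hnbr x hx
    have h2 := hnbr y hy
    exact Fin.ext (h1.trans h2.symm)
  have hnd : ((q.append r).support).Nodup := hP.support_nodup
  rw [Walk.support_append] at hnd
  exact (List.disjoint_of_nodup_append hnd) hxq (hxy ▸ hyr)

/-- pull a walk staying in the middle indices back to `G` -/
lemma pull {a : Fin n} {c d : Fin (n + 3)} (hc : c = emb n a)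
    (R : (GA n G Ed).Walk c d)
    (hsupp : ∀ v ∈ R.support, 1 ≤ v.1 ∧ v.1 ≤ n) :
    ∃ (b : Fin n) (w : G.Walk a b), d = emb n b ∧
      w.support.map (emb n) = R.support := by
  induction R generalizing a with
  | nil => exact ⟨a, Walk.nil, hc, by simp [hc]⟩
  | @cons c v d h R' ih =>
    have hvr : v ∈ (Walk.cons h R').support := by
      rw [Walk.support_cons]; exact List.mem_cons_of_mem _ R'.start_mem_support
    have hcr : c ∈ (Walk.cons h R').support := Walk.start_mem_support _
    obtain ⟨a', b', hadj, hca, hvb⟩ :=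
      nbr_mid h (hsupp c hcr) (hsupp v hvr)
    have haa : a = a' := by
      apply Fin.ext
      have := congrArg Fin.val (hc.symm.trans hca)
      rw [emb_val, emb_val] at this
      omega
    obtain ⟨b, w, hd, hmap⟩ := ih (a := b') hvb
      (fun z hz => hsupp z (by rw [Walk.support_cons]; exact List.mem_cons_of_mem _ hz))
    refine ⟨b, Walk.cons (haa ▸ hadj) w, hd, ?_⟩
    rw [Walk.support_cons, Walk.support_cons, List.map_cons, hmap, hc]

include hm in
lemma ham_aux (hmn : n / 2 + n / 2 = n) {i j : Fin (n + 3)}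
    (hi : i.1 = 0) (hj : j.1 = n + 2) (P : (GA n G Ed).Walk i j) (hP : P.IsPath)
    (hall : ∀ v, v ∈ P.support) :
    ∃ p : G.Walk (⟨0, by omega⟩ : Fin n) (⟨n - 1, by omega⟩ : Fin n),
      p.IsHamiltonian := by
  have hn1 : 1 ≤ n := by omega
  have hij : i ≠ j := fun h => by rw [h] at hi; omega
  -- peel j
  obtain ⟨y, h1, Q1, hQ1⟩ := Walk.exists_eq_cons_of_ne (Ne.symm hij) P.reverse
  have hyval : y.1 = n + 1 := nbr_zN h1 hj
  have hPrev : P.reverse.IsPath := hP.reverse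
  have hQ1path : Q1.IsPath := by rw [hQ1] at hPrev; exact hPrev.of_cons
  have hjQ1 : j ∉ Q1.support := by
    rw [hQ1] at hPrev
    have := hPrev.support_nodup
    rw [Walk.support_cons] at this
    exact (List.nodup_cons.mp this).1
  -- peel y
  have hyi : y ≠ i := fun h => by rw [h] at hyval; omega
  obtain ⟨y', h2, Q2, hQ2⟩ := Walk.exists_eq_cons_of_ne hyi Q1
  have hy'val : y'.1 = n := by
    rcases nbr_z1 h2 hyval with h | h
    · exact h
    · exfalso
      have : y' = j := Fin.ext (by omega)
      apply hjQ1
      rw [hQ2, Walk.support_cons]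
      refine List.mem_cons_of_mem _ ?_
      rw [← this]
      exact Q2.start_mem_support
  have hQ2path : Q2.IsPath := by rw [hQ2] at hQ1path; exact hQ1path.of_cons
  have hyQ2 : y ∉ Q2.support := by
    rw [hQ2] at hQ1path
    have := hQ1path.support_nodup
    rw [Walk.support_cons] at this
    exact (List.nodup_cons.mp this).1
  -- peel i from the front of Q2.reverse
  have hiy' : i ≠ y' := fun h => by rw [h] at hi; omega
  obtain ⟨x, h3, R0, hR0⟩ := Walk.exists_eq_cons_of_ne hiy' Q2.reverse
  have hxval : x.1 = 1 := nbr_z0 h3 hi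
  have hQ2rev : Q2.reverse.IsPath := hQ2path.reverse
  have hR0path : R0.IsPath := by rw [hR0] at hQ2rev; exact hQ2rev.of_cons
  have hiR0 : i ∉ R0.support := by
    rw [hR0] at hQ2rev
    have := hQ2rev.support_nodup
    rw [Walk.support_cons] at this
    exact (List.nodup_cons.mp this).1
  -- support of R0 ⊆ Q2.support
  have hsubQ2 : ∀ v ∈ R0.support, v ∈ Q2.support := by
    intro v hv
    have : v ∈ Q2.reverse.support := by
      rw [hR0, Walk.support_cons]; exact List.mem_cons_of_mem _ hv
    rwa [Walk.support_reverse, List.mem_reverse] at this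
  have hsupp : ∀ v ∈ R0.support, 1 ≤ v.1 ∧ v.1 ≤ n := by
    intro v hv
    have hvi : v ≠ i := fun h => hiR0 (h ▸ hv)
    have hvy : v ≠ y := fun h => hyQ2 (h ▸ hsubQ2 v hv)
    have hvj : v ≠ j := by
      intro h
      apply hjQ1
      rw [hQ2, Walk.support_cons]
      exact List.mem_cons_of_mem _ (h ▸ hsubQ2 v hv)
    have h2v := v.2
    constructor
    · rcases Nat.eq_zero_or_pos v.1 with h0 | h0
      · exact absurd (Fin.ext (h0.trans hi.symm)) hvi
      · exact h0
    · by_contra hgt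
      push_neg at hgt
      have hv12 : v.1 = n + 1 ∨ v.1 = n + 2 := by omega
      rcases hv12 with h | h
      · exact hvy (Fin.ext (by omega))
      · exact hvj (Fin.ext (by omega))
  -- completeness of R0.support
  have hcomp : ∀ v : Fin (n + 3), 1 ≤ v.1 → v.1 ≤ n → v ∈ R0.support := by
    intro v hv1 hv2
    have hvP : v ∈ P.reverse.support := by
      rw [Walk.support_reverse, List.mem_reverse]; exact hall v
    rw [hQ1, Walk.support_cons] at hvP
    rcases List.mem_cons.mp hvP with h | hvP
    · exfalso; rw [h] at hv2 hv1; omega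
    rw [hQ2, Walk.support_cons] at hvP
    rcases List.mem_cons.mp hvP with h | hvP
    · exfalso; rw [h] at hv2; omega
    have : v ∈ Q2.reverse.support := by
      rw [Walk.support_reverse, List.mem_reverse]; exact hvP
    rw [hR0, Walk.support_cons] at this
    rcases List.mem_cons.mp this with h | h
    · exfalso; rw [h] at hv1; omega
    · exact h
  -- pull back
  have h0lt : 0 < n := by omega
  have hnlt : n - 1 < n := by omega
  have h00 : ((⟨0, h0lt⟩ : Fin n)).1 = 0 := rfl
  have hxe : x = emb n (⟨0, h0lt⟩ : Fin n) := Fin.ext (by rw [emb_val]; omega)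
  obtain ⟨b, w, hd, hmap⟩ := pull hxe R0 hsupp
  have hbval : b.1 = n - 1 := by
    have := congrArg Fin.val hd
    rw [emb_val] at this
    omega
  have hb : b = (⟨n - 1, hnlt⟩ : Fin n) := Fin.ext hbval
  subst hb
  refine ⟨w, ?_⟩
  intro a
  have hnd : w.support.Nodup := by
    have : (w.support.map (emb n)).Nodup := hmap ▸ hR0path.support_nodup
    exact this.of_map
  have hmem : a ∈ w.support := by
    have : emb n a ∈ R0.support := by
      apply hcomp
      · rw [emb_val]; omega
      · rw [emb_val]; have := a.2; omega
    rw [← hmap] at this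
    obtain ⟨a', ha', heq⟩ := List.mem_map.mp this
    have : a' = a := Fin.ext (by
      have := congrArg Fin.val heq
      rw [emb_val, emb_val] at this
      omega)
    exact this ▸ ha'
  exact List.count_eq_one_of_mem hnd hmem

lemma dist_HH_le_GA_walk {i j : Fin (n + 3)} (w : (GA n G Ed).Walk i j) :
    (HH n G Ed).dist (Sum.inl i) (Sum.inl j) ≤ w.length := by
  have h := SimpleGraph.dist_le (w.map (GAhom (n := n) (G := G) (Ed := Ed)))
  rwa [Walk.length_map] at h

include hm in
lemma key_lemma (hmn : n / 2 + n / 2 = n)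
    (hNoHam : ∀ p : G.Walk (⟨0, by omega⟩ : Fin n) (⟨n - 1, by omega⟩ : Fin n),
      ¬ p.IsHamiltonian)
    {i j : Fin (n + 3)} (hr : (GA n G Ed).Reachable i j)
    (hd : (HH n G Ed).dist (Sum.inl i) (Sum.inl j) = n + 2) : False := by
  obtain ⟨w0⟩ := hr
  set P := w0.bypass with hPdef
  have hP : P.IsPath := w0.bypass_isPath
  have hlen1 : P.length ≤ n + 2 := by
    have := hP.length_lt
    rw [Fintype.card_fin] at this
    omega
  have hlen2 : n + 2 ≤ P.length := by
    have := dist_HH_le_GA_walk P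
    omega
  have hlen : P.length = n + 2 := le_antisymm hlen1 hlen2
  have hall : ∀ v : Fin (n + 3), v ∈ P.support := by
    intro v
    have hnd := hP.support_nodup
    have hlsupp : P.support.length = n + 3 := by
      rw [Walk.length_support, hlen]
    have hcard : P.support.toFinset.card = n + 3 := by
      rw [List.toFinset_card_of_nodup hnd, hlsupp]
    have huniv : P.support.toFinset = Finset.univ := by
      apply Finset.eq_univ_of_card
      rw [hcard, Fintype.card_fin]
    have : v ∈ P.support.toFinset := huniv ▸ Finset.mem_univ v
    exact List.mem_toFinset.mp this
  have hij : i ≠ j := by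
    intro h
    rw [h, SimpleGraph.dist_self] at hd
    omega
  have hz0 : (⟨0, by omega⟩ : Fin (n + 3)) = i ∨ (⟨0, by omega⟩ : Fin (n + 3)) = j :=
    endpoint_of_unique_nbr hP (hall _) 1 (fun b hb => nbr_z0 hb rfl)
  have hzN : (⟨n + 2, by omega⟩ : Fin (n + 3)) = i ∨ (⟨n + 2, by omega⟩ : Fin (n + 3)) = j :=
    endpoint_of_unique_nbr hP (hall _) (n + 1) (fun b hb => nbr_zN hb rfl)
  rcases hz0 with h0 | h0 <;> rcases hzN with hN | hN
  · exfalso; have := h0.trans hN.symm; exact absurd (congrArg Fin.val this) (by simp)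
  · obtain ⟨p, hp⟩ := ham_aux hm hmn (i := i) (j := j)
      (by rw [← h0]) (by rw [← hN]) P hP hall
    exact hNoHam p hp
  · obtain ⟨p, hp⟩ := ham_aux hm hmn (i := j) (j := i)
      (by rw [← h0]) (by rw [← hN]) P.reverse hP.reverse
      (fun v => by rw [Walk.support_reverse, List.mem_reverse]; exact hall v)
    exact hNoHam p hp
  · exfalso; have := h0.trans hN.symm; exact absurd (congrArg Fin.val this) (by simp)

/-- convert an `HH`-walk whose support is all `inl` into `GA`-reachability -/
lemma toGA_reach {x y : Vpp n} (W : (HH n G Ed).Walk x y)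
    (h : ∀ z ∈ W.support, ∃ w', z = Sum.inl w') :
    ∀ c' d', x = Sum.inl c' → y = Sum.inl d' → (GA n G Ed).Reachable c' d' := by
  induction W with
  | nil =>
    rintro c' d' rfl h2
    obtain rfl := Sum.inl_injective h2
    exact SimpleGraph.Reachable.refl _
  | @cons xx vv yy h' W' ih =>
    rintro c' d' rfl rfl
    obtain ⟨m, rfl⟩ := h vv (by rw [Walk.support_cons]; exact List.mem_cons_of_mem _ W'.start_mem_support)
    have hadj : (GA n G Ed).Adj c' m := h'
    refine (SimpleGraph.Adj.reachable hadj).trans ?_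
    exact ih (fun z hz => h z (by rw [Walk.support_cons]; exact List.mem_cons_of_mem _ hz)) m d' rfl rfl

lemma cast_half (hmn : n / 2 + n / 2 = n) : ((n / 2 : ℕ) : ℝ) = (n : ℝ) / 2 := by
  have h : ((n / 2 : ℕ) : ℝ) + ((n / 2 : ℕ) : ℝ) = (n : ℝ) := by exact_mod_cast congrArg Nat.cast hmn
  linarith

include hEd hm in
lemma side_thin (hmn : n / 2 + n / 2 = n)
    (hNoHam : ∀ p : G.Walk (⟨0, by omega⟩ : Fin n) (⟨n - 1, by omega⟩ : Fin n),
      ¬ p.IsHamiltonian)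
    {a b c d e f' : Vpp n} (p : (HH n G Ed).Walk a b)
    (hp : p.length = (HH n G Ed).dist a b)
    (q : (HH n G Ed).Walk c d) (r : (HH n G Ed).Walk e f')
    (W : (HH n G Ed).Walk a b)
    (hW : ∀ x ∈ W.support, x ∈ q.support ∨ x ∈ r.support) :
    ∀ x ∈ p.support, ∃ y, (y ∈ q.support ∨ y ∈ r.support) ∧
      ((HH n G Ed).dist x y : ℝ) ≤ (n : ℝ) / 2 := by
  classical
  intro x hx
  have hconn := HH_conn hEd hm
  have hhalf := cast_half hmn
  obtain ⟨p1, p2, rfl⟩ := Walk.mem_support_iff_exists_append.mp hx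
  by_cases h1 : (HH n G Ed).dist a x ≤ n / 2
  · refine ⟨a, hW a W.start_mem_support, ?_⟩
    rw [SimpleGraph.dist_comm]
    rw [← hhalf]
    exact_mod_cast h1
  by_cases h2 : (HH n G Ed).dist x b ≤ n / 2
  · refine ⟨b, hW b W.end_mem_support, ?_⟩
    rw [← hhalf]
    exact_mod_cast h2
  push_neg at h1 h2
  have hd1 : (HH n G Ed).dist a x ≤ p1.length := SimpleGraph.dist_le p1
  have hd2 : (HH n G Ed).dist x b ≤ p2.length := SimpleGraph.dist_le p2
  have hdiam : (HH n G Ed).dist a b ≤ n + 2 := dist_le_diam hEd hm hmn a b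
  have hlen : p1.length + p2.length = (HH n G Ed).dist a b := by
    rw [← hp, Walk.length_append]
  have hax : (HH n G Ed).dist a x = n / 2 + 1 := by omega
  have hxb : (HH n G Ed).dist x b = n / 2 + 1 := by omega
  have hab : (HH n G Ed).dist a b = n + 2 := by omega
  -- a and b must be `inl`
  have htri := hconn.dist_triangle (u := a) (v := uV n) (w := b)
  rw [SimpleGraph.dist_comm (G := HH n G Ed) (u := a) (v := uV n)] at htri
  have hua := dist_u_all hEd hm a
  have hub := dist_u_all hEd hm b
  obtain ⟨i, rfl⟩ : ∃ i, a = Sum.inl i := by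
    match a with
    | Sum.inl i => exact ⟨i, rfl⟩
    | Sum.inr z =>
      exfalso
      have := dist_u_inr hEd hm (G := G) z
      omega
  obtain ⟨j, rfl⟩ : ∃ j, b = Sum.inl j := by
    match b with
    | Sum.inl j => exact ⟨j, rfl⟩
    | Sum.inr z =>
      exfalso
      have := dist_u_inr hEd hm (G := G) z
      omega
  match x with
  | Sum.inl k =>
    exfalso
    have hf1 := fpot_le_dist hEd hm hmn i (Sum.inl k)
    have hf2 := fpot_le_dist hEd hm hmn j (Sum.inl k)
    rw [hax] at hf1
    rw [SimpleGraph.dist_comm, hxb] at hf2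
    have hc1 : capD n G Ed i k ≤ n / 2 + 1 := hf1
    have hc2 : capD n G Ed j k ≤ n / 2 + 1 := hf2
    obtain ⟨hr1, -⟩ := capD_reach (by omega : capD n G Ed i k ≤ n + 1)
    obtain ⟨hr2, -⟩ := capD_reach (by omega : capD n G Ed j k ≤ n + 1)
    exact key_lemma hm hmn hNoHam (hr1.trans hr2.symm) hab
  | Sum.inr (Sum.inl (k, t)) =>
    exfalso
    have hf1 := fpot_le_dist hEd hm hmn i (Sum.inr (Sum.inl (k, t)))
    have hf2 := fpot_le_dist hEd hm hmn j (Sum.inr (Sum.inl (k, t)))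
    rw [hax] at hf1
    rw [SimpleGraph.dist_comm, hxb] at hf2
    have ht2 := t.2
    have hc1 : capD n G Ed i k ≤ t.1 + 1 := by
      have : min (capD n G Ed i k + (n / 2 - t.1)) (n / 2 + 2 + t.1) ≤ n / 2 + 1 := hf1
      omega
    have hc2 : capD n G Ed j k ≤ t.1 + 1 := by
      have : min (capD n G Ed j k + (n / 2 - t.1)) (n / 2 + 2 + t.1) ≤ n / 2 + 1 := hf2
      omega
    obtain ⟨hr1, hd1'⟩ := capD_reach (by omega : capD n G Ed i k ≤ n + 1)
    obtain ⟨hr2, hd2'⟩ := capD_reach (by omega : capD n G Ed j k ≤ n + 1)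
    obtain ⟨w1, hw1⟩ := hr1.exists_walk_length_eq_dist
    obtain ⟨w2, hw2⟩ := hr2.exists_walk_length_eq_dist
    have hfin := dist_HH_le_GA_walk (w1.append w2.reverse)
    rw [Walk.length_append, Walk.length_reverse, hw1, hw2] at hfin
    omega
  | Sum.inr (Sum.inr ()) =>
    rcases Classical.em (∀ z, (z ∈ q.support ∨ z ∈ r.support) → ∃ w', z = Sum.inl w')
      with hallin | hallin
    · have hWin : ∀ z ∈ W.support, ∃ w', z = Sum.inl w' := fun z hz => hallin z (hW z hz)
      exfalso
      have hreach := toGA_reach W hWin i j rfl rfl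
      exact key_lemma hm hmn hNoHam hreach hab
    · push_neg at hallin
      obtain ⟨z, hzmem, hz⟩ := hallin
      obtain ⟨z', rfl⟩ : ∃ z', z = Sum.inr z' := by
        match z with
        | Sum.inl w' => exact absurd rfl (hz w')
        | Sum.inr z' => exact ⟨z', rfl⟩
      refine ⟨Sum.inr z', hzmem, ?_⟩
      show ((HH n G Ed).dist (uV n) (Sum.inr z') : ℝ) ≤ (n : ℝ) / 2
      have := dist_u_inr hEd hm (G := G) z'
      rw [← hhalf]
      exact_mod_cast this





end Statement16Aux

/-- If the cubic graph `G` contains no Hamiltonian path between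
`v₁` and `v_n`, then for every set `E_d` of edges of `G` (regarded as edges of `G''`)
one has `C_Gromov(G'' ∖ E_d) ≤ n/2`. -/
theorem gromovCurvature_Gpp_delete_le (n : ℕ) (hn : Even n) (hpos : 0 < n)
    (G : SimpleGraph (Fin n)) [DecidableRel G.Adj] (hcubic : ∀ v, G.degree v = 3)
    (hNoHam : ¬ ∃ p : G.Walk (⟨0, hpos⟩ : Fin n) (⟨n - 1, by omega⟩ : Fin n),
      p.IsHamiltonian) :
    ∀ Ed ⊆ embeddedGEdges n G,
      ((Gpp n G).deleteEdges Ed).gromovCurvature ≤ (n : ℝ) / 2 := by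
  intro Ed hEd
  have hn4 : 4 ≤ n := by
    have h := G.degree_lt_card_verts ⟨0, hpos⟩
    rw [Fintype.card_fin, hcubic] at h
    omega
  have hm : 2 ≤ n / 2 := by omega
  have hmn : n / 2 + n / 2 = n := by obtain ⟨k, hk⟩ := hn; omega
  have hNoHam' : ∀ p : G.Walk (⟨0, by omega⟩ : Fin n) (⟨n - 1, by omega⟩ : Fin n),
      ¬ p.IsHamiltonian := fun p hp => hNoHam ⟨p, hp⟩
  unfold SimpleGraph.gromovCurvature
  apply csInf_le
  · exact ⟨0, fun δ hδ => hδ.1⟩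
  · refine ⟨by positivity, ?_⟩
    intro u v w puv puw pvw hpuv hpuw hpvw
    refine ⟨?_, ?_, ?_⟩
    · exact side_thin hEd hm hmn hNoHam' puv hpuv puw pvw (puw.append pvw.reverse)
        (fun x hx => by
          rcases (SimpleGraph.Walk.mem_support_append_iff _ _).mp hx with h | h
          · exact Or.inl h
          · right; rwa [SimpleGraph.Walk.support_reverse, List.mem_reverse] at h)
    · exact side_thin hEd hm hmn hNoHam' puw hpuw puv pvw (puv.append pvw)
        (fun x hx => (SimpleGraph.Walk.mem_support_append_iff _ _).mp hx)
    · exact side_thin hEd hm hmn hNoHam' pvw hpvw puv puw (puv.reverse.append puw)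
        (fun x hx => by
          rcases (SimpleGraph.Walk.mem_support_append_iff _ _).mp hx with h | h
          · left; rwa [SimpleGraph.Walk.support_reverse, List.mem_reverse] at h
          · exact Or.inr h)

end GromovConstruction
end
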